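/- arXiv:math/0008017 — 7 statements merged into one kernel-verified Lean document; each statement's English description precedes it below -/
import Mathlib

section
/- Let λ ∈ ℚ and b = den λ. Then the sequence ψ_k = b^k · ∏_{p prime, p ∣ b} p^{τ_p(k)} of positive integers satisfies: ψ_k · ⟨λ⟩_n / n! ∈ ℤ for all 0 ≤ n ≤ k and all k ∈ ℕ, and limsup_{k→∞} ψ_k^{1/k} ≤ b·e^{χ(b)}. (That is, every rational number λ satisfies the condition of cancellation of factorials with constant b·e^{χ(b)}.) -/
/-!
Write `λ = a / b` in lowest terms, so that `bⁿ ⟨λ⟩_n = ∏_{i<n} (a - i b)`. For a prime power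
`pᵉ ∣ n!` with `p ∤ b`, the number `b` is invertible modulo `pᵉ`, and multiplying by `u ≡ b⁻¹`
turns the product, modulo `pᵉ`, into the falling factorial `⟨u a⟩_n` of an integer, which `n!`
divides. For `p ∣ b` the factor `p^{τ_p(k)}` of `ψ_k` absorbs `pᵉ`, as `e ≤ τ_p(n) ≤ τ_p(k)`.
The growth bound is Legendre's `(p - 1) τ_p(k) ≤ k`, which gives `ψ_k ≤ (b e^{χ(b)})^k`.
-/

/-- The falling factorial `⟨a⟩_n = a(a-1)⋯(a-n+1)` in a ring. -/
def fall {R : Type*} [Ring R] (a : R) : ℕ → R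
  | 0 => 1
  | n + 1 => fall a n * (a - (n : R))

/-- `χ(b) = ∑_{p ∣ b, p prime} log p / (p-1)`. -/
noncomputable def chi (b : ℕ) : ℝ := ∑ p ∈ b.primeFactors, Real.log p / ((p : ℝ) - 1)

/-- `τ_p(k)`, the exponent of the prime `p` in `k!`. -/
def tau (p k : ℕ) : ℕ := (Nat.factorial k).factorization p

open Finset Filter Real
open scoped Nat

lemma fall_eq_prod_range {R : Type*} [CommRing R] (a : R) (n : ℕ) :
    fall a n = ∏ i ∈ range n, (a - i) := by
  induction n with
  | zero => rfl
  | succ n ih => rw [fall, ih, prod_range_succ]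

lemma factorial_dvd_prod_range_sub (a : ℤ) (n : ℕ) : (n ! : ℤ) ∣ ∏ i ∈ range n, (a - i) := by
  rw [← descPochhammer_eval_eq_prod_range, Polynomial.eval_eq_smeval,
    Ring.descPochhammer_eq_factorial_smul_choose, nsmul_eq_mul]
  exact dvd_mul_right _ _

lemma den_pow_mul_fall (q : ℚ) (n : ℕ) :
    (q.den : ℚ) ^ n * fall q n = ∏ i ∈ range n, ((q.num : ℚ) - i * q.den) := by
  rw [fall_eq_prod_range, pow_eq_prod_const, ← prod_mul_distrib]
  refine prod_congr rfl fun i _ => ?_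
  linear_combination q.den_mul_eq_num

lemma dvd_prod_range_sub_mul_of_isCoprime {a c m : ℤ} {n : ℕ} (hm : m ∣ n !)
    (hc : IsCoprime c m) : m ∣ ∏ i ∈ range n, (a - i * c) := by
  obtain ⟨u, v, huv⟩ := hc
  have hu : IsCoprime (u ^ n) m := IsCoprime.pow_left ⟨c, v, by linear_combination huv⟩
  refine hu.symm.dvd_of_dvd_mul_left ?_
  have hmod : u ^ n * ∏ i ∈ range n, (a - i * c) ≡ ∏ i ∈ range n, (u * a - i) [ZMOD m] := by
    rw [pow_eq_prod_const, ← prod_mul_distrib]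
    refine Int.ModEq.prod fun i _ => (Int.modEq_iff_dvd.mpr ⟨i * v, ?_⟩).symm
    linear_combination (-(i : ℤ)) * huv
  exact Int.modEq_zero_iff_dvd.mp
    (hmod.trans (Int.modEq_zero_iff_dvd.mpr (hm.trans (factorial_dvd_prod_range_sub _ n))))

lemma factorial_dvd_prod_primeFactors_pow_tau_mul {n k b : ℕ} (hnk : n ≤ k) (hb : b ≠ 0)
    (a : ℤ) :
    (n ! : ℤ) ∣ (∏ p ∈ b.primeFactors, (p : ℤ) ^ tau p k) * ∏ i ∈ range n, (a - i * b) := by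
  rw [Int.natCast_dvd, Nat.dvd_iff_prime_pow_dvd_dvd]
  intro p e hp hpe
  rw [← Int.natCast_dvd, Nat.cast_pow]
  by_cases hpb : p ∣ b
  · have he : e ≤ tau p k :=
      ((hp.pow_dvd_iff_le_factorization (Nat.factorial_ne_zero k)).mp
        (hpe.trans (Nat.factorial_dvd_factorial hnk)))
    have hmem : p ∈ b.primeFactors := Nat.mem_primeFactors.mpr ⟨hp, hpb, hb⟩
    exact dvd_mul_of_dvd_left
      ((pow_dvd_pow _ he).trans (dvd_prod_of_mem (fun q : ℕ => (q : ℤ) ^ tau q k) hmem)) _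
  · refine dvd_mul_of_dvd_right (dvd_prod_range_sub_mul_of_isCoprime (mod_cast hpe) ?_) _
    exact Nat.isCoprime_iff_coprime.mpr ((hp.coprime_iff_not_dvd.mpr hpb).pow_left e).symm

lemma exists_intCast_eq_mul_fall_div_factorial (q : ℚ) {n k : ℕ} (hnk : n ≤ k) :
    ∃ z : ℤ, ((q.den ^ k * ∏ p ∈ q.den.primeFactors, p ^ tau p k : ℕ) : ℚ) * fall q n / n !
      = z := by
  obtain ⟨z, hz⟩ := factorial_dvd_prod_primeFactors_pow_tau_mul hnk q.den_ne_zero q.num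
  have hzQ := congrArg (Int.cast : ℤ → ℚ) hz
  push_cast at hzQ
  refine ⟨q.den ^ (k - n) * z, ?_⟩
  rw [div_eq_iff (mod_cast n.factorial_ne_zero)]
  push_cast
  rw [← pow_sub_mul_pow _ hnk]
  linear_combination (q.den : ℚ) ^ (k - n) * hzQ
    + (q.den : ℚ) ^ (k - n) * (∏ p ∈ q.den.primeFactors, (p : ℚ) ^ tau p k) * den_pow_mul_fall q n

lemma sub_one_mul_tau_le {p : ℕ} (hp : p.Prime) (k : ℕ) : (p - 1) * tau p k ≤ k := by
  have := Fact.mk hp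
  rw [tau, Nat.factorization_def _ hp, sub_one_mul_padicValNat_factorial]
  exact Nat.sub_le _ _

lemma prod_primeFactors_pow_tau_le_exp (b k : ℕ) :
    ∏ p ∈ b.primeFactors, (p : ℝ) ^ tau p k ≤ exp (k * chi b) := by
  rw [chi, mul_sum, exp_sum]
  refine prod_le_prod (fun p _ => by positivity) fun p hp => ?_
  have hp := Nat.prime_of_mem_primeFactors hp
  have hp1 : (0 : ℝ) < p - 1 := sub_pos.mpr (mod_cast hp.one_lt)
  have htau : (tau p k : ℝ) ≤ k / (p - 1) := by
    have h : ((p - 1 : ℕ) : ℝ) * tau p k ≤ k := mod_cast sub_one_mul_tau_le hp k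
    rw [Nat.cast_sub hp.one_le, Nat.cast_one] at h
    rw [le_div_iff₀ hp1, mul_comm]
    exact h
  rw [← exp_log (pow_pos (Nat.cast_pos.mpr hp.pos) _), log_pow, exp_le_exp, ← mul_div_assoc,
    mul_div_right_comm]
  exact mul_le_mul_of_nonneg_right htau (log_nonneg (mod_cast hp.one_le))

lemma limsup_rpow_one_div_le_of_le_pow {u : ℕ → ℝ} {C : ℝ} (hu0 : ∀ k, 0 ≤ u k)
    (hu : ∀ k, u k ≤ C ^ k) : limsup (fun k => u k ^ (1 / (k : ℝ))) atTop ≤ C := by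
  have hC : 0 ≤ C := (hu0 1).trans ((hu 1).trans_eq (pow_one C))
  refine limsup_le_of_le (isCoboundedUnder_le_of_le atTop fun k => rpow_nonneg (hu0 k) _)
    (eventually_atTop.mpr ⟨1, fun k hk => ?_⟩)
  calc u k ^ (1 / (k : ℝ)) ≤ (C ^ k) ^ (1 / (k : ℝ)) := by gcongr; exacts [hu0 k, hu k]
    _ = C := by rw [one_div, pow_rpow_inv_natCast hC (by omega)]

/-- every rational number `λ` satisfies the condition of cancellation of
factorials with constant `b·e^{χ(b)}`, where `b = den λ`, witnessed by the sequence
`ψ_k = b^k · ∏_{p ∣ b} p^{τ_p(k)}`. -/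
theorem stmt_1 (lam : ℚ) (b : ℕ) (hb : b = lam.den)
    (ψ : ℕ → ℕ)
    (hψ : ∀ k, ψ k = b ^ k * ∏ p ∈ b.primeFactors, p ^ tau p k) :
    (∀ k, 0 < ψ k) ∧
    (∀ k : ℕ, ∀ n ≤ k, ∃ z : ℤ, (ψ k : ℚ) * fall lam n / (n.factorial : ℚ) = (z : ℚ)) ∧
    Filter.limsup (fun k => (ψ k : ℝ) ^ (1 / (k : ℝ))) Filter.atTop
      ≤ (b : ℝ) * Real.exp (chi b) := by
  subst hb
  have hψ_le : ∀ k, (ψ k : ℝ) ≤ (lam.den * exp (chi lam.den)) ^ k := fun k => by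
    rw [hψ k, mul_pow, ← exp_nat_mul]
    push_cast
    exact mul_le_mul_of_nonneg_left (prod_primeFactors_pow_tau_le_exp _ k) (by positivity)
  refine ⟨fun k => ?_, fun k n hnk => hψ k ▸ exists_intCast_eq_mul_fall_div_factorial lam hnk,
    limsup_rpow_one_div_le_of_le_pow (fun k => Nat.cast_nonneg _) hψ_le⟩
  rw [hψ k]
  exact Nat.mul_pos (pow_pos lam.den_pos k)
    (prod_pos fun p hp => pow_pos (Nat.pos_of_mem_primeFactors hp) _)
end

section
/- Fix λ_1,…,λ_s ∈ ℚ and pairwise distinct γ_1,…,γ_s ∈ ℚ, and let D be the ℚ-linear operator on ℚ(z) defined by D f = f′ + Σ_{l=1}^{s} (λ_l/(z−γ_l))·f. Then for every n ≥ 1 and every f ∈ ℚ(z): D^n f = Σ_{n_0+n_1+⋯+n_s = n, n_i ≥ 0} (n!/(n_0!·n_1!⋯n_s!)) · (⟨λ_1⟩_{n_1}/(z−γ_1)^{n_1}) ⋯ (⟨λ_s⟩_{n_s}/(z−γ_s)^{n_s}) · f^{(n_0)}, where f^{(j)} is the j-th derivative of f. -/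
open Finset

/-- Product rule for derivations over a finite product. -/
lemma d_prod {K : Type*} [Field K] [Algebra ℚ K] (d : Derivation ℚ K K)
    {ι : Type*} [DecidableEq ι] (t : Finset ι) (v : ι → K) :
    d (∏ i ∈ t, v i) = ∑ i ∈ t, (∏ j ∈ t.erase i, v j) * d (v i) := by
  induction t using Finset.induction_on with
  | empty => simp
  | @insert a t ha ih =>
    rw [Finset.prod_insert ha, Derivation.leibniz, smul_eq_mul, smul_eq_mul, ih,
      Finset.sum_insert ha, Finset.erase_insert ha, Finset.mul_sum]
    rw [add_comm]
    congr 1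
    refine Finset.sum_congr rfl fun i hi => ?_
    have hia : i ≠ a := by rintro rfl; exact ha hi
    rw [Finset.erase_insert_of_ne hia.symm, Finset.prod_insert
      (fun h => ha (Finset.mem_of_mem_erase h))]
    ring

lemma prod_fact_sub {k : ℕ} (μ : Fin k → ℕ) (i : Fin k) (hi : μ i ≠ 0) :
    ∏ j, ((μ j).factorial : ℚ) =
      (μ i : ℚ) * ∏ j, ((((μ - Pi.single i 1 : Fin k → ℕ)) j).factorial : ℚ) := by
  conv_lhs => rw [← Finset.mul_prod_erase Finset.univ _ (Finset.mem_univ i)]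
  conv_rhs => rw [← Finset.mul_prod_erase Finset.univ _ (Finset.mem_univ i)]
  have h1 : ((μ - Pi.single i 1 : Fin k → ℕ)) i = μ i - 1 := by simp [Pi.sub_apply]
  have h2 : ∀ j ∈ Finset.univ.erase i,
      ((((μ - Pi.single i 1 : Fin k → ℕ)) j).factorial : ℚ) = ((μ j).factorial : ℚ) := by
    intro j hj
    have : j ≠ i := (Finset.mem_erase.1 hj).1
    simp [Pi.sub_apply, Pi.single_apply, this]
  rw [Finset.prod_congr rfl h2, h1]
  have h3 : (μ i).factorial = μ i * (μ i - 1).factorial := by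
    obtain ⟨m, hm⟩ := Nat.exists_eq_succ_of_ne_zero hi
    rw [hm]; simp [Nat.factorial_succ]
  rw [h3]; push_cast; ring

lemma scal {k n : ℕ} (μ : Fin k → ℕ) (h : ∑ j, μ j = n + 1) :
    ∑ i : Fin k, (if μ i ≠ 0 then
        (n.factorial : ℚ) / ∏ j, ((((μ - Pi.single i 1 : Fin k → ℕ)) j).factorial : ℚ) else 0)
      = ((n + 1).factorial : ℚ) / ∏ j, ((μ j).factorial : ℚ) := by
  have hne : ∀ (ν : Fin k → ℕ), (∏ j, ((ν j).factorial : ℚ)) ≠ 0 := fun ν =>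
    Finset.prod_ne_zero_iff.2 fun j _ => Nat.cast_ne_zero.2 (Nat.factorial_ne_zero _)
  have hterm : ∀ i : Fin k, (if μ i ≠ 0 then
      (n.factorial : ℚ) / ∏ j, ((((μ - Pi.single i 1 : Fin k → ℕ)) j).factorial : ℚ) else 0)
      = (μ i : ℚ) * ((n.factorial : ℚ) / ∏ j, ((μ j).factorial : ℚ)) := by
    intro i
    by_cases hi : μ i = 0
    · simp [hi]
    · rw [if_pos hi, prod_fact_sub μ i hi]
      have := hne ((μ - Pi.single i 1 : Fin k → ℕ))
      have hμi : (μ i : ℚ) ≠ 0 := Nat.cast_ne_zero.2 hi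
      field_simp
  rw [Finset.sum_congr rfl fun i _ => hterm i, ← Finset.sum_mul]
  have : (∑ i, (μ i : ℚ)) = ((n : ℚ) + 1) := by
    rw [← Nat.cast_sum, h]; push_cast; ring
  rw [this, Nat.factorial_succ]
  push_cast; ring

lemma comb {k n : ℕ} {M : Type*} [AddCommMonoid M] [Module ℚ M]
    (G : (Fin k → ℕ) → M) :
    ∑ i : Fin k, ∑ ν ∈ Finset.Nat.antidiagonalTuple k n,
        ((n.factorial : ℚ) / ∏ j, ((ν j).factorial : ℚ)) • G (ν + Pi.single i 1)
      = ∑ μ ∈ Finset.Nat.antidiagonalTuple k (n + 1),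
        (((n + 1).factorial : ℚ) / ∏ j, ((μ j).factorial : ℚ)) • G μ := by
  have hA : ∀ i : Fin k,
      (∑ ν ∈ Finset.Nat.antidiagonalTuple k n,
        ((n.factorial : ℚ) / ∏ j, ((ν j).factorial : ℚ)) • G (ν + Pi.single i 1))
      = ∑ μ ∈ (Finset.Nat.antidiagonalTuple k (n + 1)).filter (fun μ => μ i ≠ 0),
        ((n.factorial : ℚ) / ∏ j, ((((μ - Pi.single i 1 : Fin k → ℕ)) j).factorial : ℚ)) • G μ := by
    intro i
    refine Finset.sum_bij' (fun ν _ => ν + Pi.single i 1) (fun μ _ => (μ - Pi.single i 1 : Fin k → ℕ))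
      ?_ ?_ ?_ ?_ ?_
    · intro ν hν
      rw [Finset.Nat.mem_antidiagonalTuple] at hν
      rw [Finset.mem_filter, Finset.Nat.mem_antidiagonalTuple]
      constructor
      · simp [Finset.sum_add_distrib, hν, Finset.sum_pi_single']
      · simp [Pi.add_apply]
    · intro μ hμ
      rw [Finset.mem_filter, Finset.Nat.mem_antidiagonalTuple] at hμ
      rw [Finset.Nat.mem_antidiagonalTuple]
      have hrestore : ((μ - Pi.single i 1 : Fin k → ℕ)) + Pi.single i 1 = μ := by
        funext j
        by_cases hj : j = i
        · subst hj
          simp [Pi.sub_apply, Nat.sub_add_cancel (Nat.one_le_iff_ne_zero.2 hμ.2)]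
        · simp [Pi.sub_apply, Pi.single_apply, hj]
      have h2 : (∑ j, (μ - Pi.single i 1 : Fin k → ℕ) j) + 1 = n + 1 := by
        calc (∑ j, (μ - Pi.single i 1 : Fin k → ℕ) j) + 1
            = ∑ j, ((μ - Pi.single i 1 + Pi.single i 1 : Fin k → ℕ)) j := by
              simp [Pi.add_apply, Finset.sum_add_distrib, Finset.sum_pi_single']
          _ = n + 1 := by rw [hrestore]; exact hμ.1
      simpa using Nat.succ_injective h2
    · intro ν _
      funext j
      simp [Pi.sub_apply]
    · intro μ hμ
      rw [Finset.mem_filter] at hμ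
      funext j
      by_cases hj : j = i
      · subst hj
        simp [Pi.sub_apply, Nat.sub_add_cancel (Nat.one_le_iff_ne_zero.2 hμ.2)]
      · simp [Pi.sub_apply, Pi.single_apply, hj]
    · intro ν _
      have hν : ((ν + Pi.single i 1 : Fin k → ℕ) - Pi.single i 1 : Fin k → ℕ) = ν := by
        funext j; simp [Pi.sub_apply]
      rw [hν]
  rw [Finset.sum_congr rfl fun i _ => hA i]
  have hfil : ∀ i : Fin k,
      (∑ μ ∈ (Finset.Nat.antidiagonalTuple k (n + 1)).filter (fun μ => μ i ≠ 0),
        ((n.factorial : ℚ) / ∏ j, ((((μ - Pi.single i 1 : Fin k → ℕ)) j).factorial : ℚ)) • G μ)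
      = ∑ μ ∈ Finset.Nat.antidiagonalTuple k (n + 1),
        (if μ i ≠ 0 then
          ((n.factorial : ℚ) / ∏ j, ((((μ - Pi.single i 1 : Fin k → ℕ)) j).factorial : ℚ))
          else 0) • G μ := by
    intro i
    rw [Finset.sum_filter]
    refine Finset.sum_congr rfl fun μ _ => ?_
    by_cases hμ : μ i ≠ 0 <;> simp [hμ]
  rw [Finset.sum_congr rfl fun i _ => hfil i, Finset.sum_comm]
  refine Finset.sum_congr rfl fun μ hμ => ?_
  rw [Finset.Nat.mem_antidiagonalTuple] at hμ
  rw [← Finset.sum_smul] at *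
  rw [scal μ hμ]

namespace Stmt4Aux

variable {s : ℕ} (lam γ : Fin s → ℚ)

/-- The product `∏_l ⟨λ_l⟩_{ν_{l+1}} (X-γ_l)^{-ν_{l+1}}`. -/
noncomputable def Pfun (ν : Fin (s + 1) → ℕ) : RatFunc ℚ :=
  ∏ l : Fin s, RatFunc.C (fall (lam l) (ν l.succ)) *
    (RatFunc.X - RatFunc.C (γ l)) ^ (-(ν l.succ : ℤ))

lemma u_ne_zero (a : ℚ) : RatFunc.X - RatFunc.C a ≠ 0 := by
  have h : (Polynomial.X - Polynomial.C a : Polynomial ℚ) ≠ 0 :=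
    Polynomial.X_sub_C_ne_zero a
  have h2 := RatFunc.algebraMap_ne_zero h
  rwa [map_sub, RatFunc.algebraMap_X, RatFunc.algebraMap_C] at h2

variable (d : Derivation ℚ (RatFunc ℚ) (RatFunc ℚ))

lemma dC (a : ℚ) : d (RatFunc.C a) = 0 := by
  have h : RatFunc.C a = @algebraMap ℚ (RatFunc ℚ) _ _ DivisionRing.toRatAlgebra a := by
    rw [← RatFunc.algebraMap_eq_C]; exact RingHom.congr_fun (Subsingleton.elim _ _) a
  rw [h]
  exact Derivation.map_algebraMap d a

lemma du (hd : d RatFunc.X = 1) (a : ℚ) : d (RatFunc.X - RatFunc.C a) = 1 := by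
  rw [map_sub, hd, dC, sub_zero]

lemma dCmul (a : ℚ) (x : RatFunc ℚ) : d (RatFunc.C a * x) = RatFunc.C a * d x := by
  rw [Derivation.leibniz, dC, smul_eq_mul, smul_eq_mul, mul_zero, add_zero]

lemma dF (hd : d RatFunc.X = 1) (c a : ℚ) (m : ℕ) :
    d (RatFunc.C c * (RatFunc.X - RatFunc.C a) ^ (-(m : ℤ))) =
      RatFunc.C c * (RatFunc.X - RatFunc.C a) ^ (-(m : ℤ)) *
        (-(m : RatFunc ℚ) * (RatFunc.X - RatFunc.C a)⁻¹) := by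
  rw [dCmul, Derivation.leibniz_zpow, du d hd, smul_eq_mul, mul_one,
    zpow_sub_one₀ (u_ne_zero a), zsmul_eq_mul]
  push_cast
  ring

lemma P_zero : Pfun lam γ 0 = 1 := by
  simp [Pfun, fall]

lemma P_single_zero (ν : Fin (s + 1) → ℕ) :
    Pfun lam γ (ν + Pi.single 0 1 : Fin (s + 1) → ℕ) = Pfun lam γ ν := by
  unfold Pfun
  refine Finset.prod_congr rfl fun l _ => ?_
  have h : ((ν + Pi.single (0 : Fin (s + 1)) 1 : Fin (s + 1) → ℕ)) l.succ = ν l.succ := by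
    simp [Pi.single_apply, Fin.succ_ne_zero l]
  rw [h]

lemma comp_single_zero (ν : Fin (s + 1) → ℕ) :
    ((ν + Pi.single (0 : Fin (s + 1)) 1 : Fin (s + 1) → ℕ)) 0 = ν 0 + 1 := by simp

lemma comp_single_succ (ν : Fin (s + 1) → ℕ) (l : Fin s) :
    ((ν + Pi.single l.succ 1 : Fin (s + 1) → ℕ)) 0 = ν 0 := by
  simp [Pi.single_apply, (Fin.succ_ne_zero l).symm]

lemma P_single_succ (ν : Fin (s + 1) → ℕ) (l : Fin s) :
    Pfun lam γ (ν + Pi.single l.succ 1 : Fin (s + 1) → ℕ) =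
      Pfun lam γ ν * (RatFunc.C (lam l - (ν l.succ : ℚ)) *
        (RatFunc.X - RatFunc.C (γ l))⁻¹) := by
  unfold Pfun
  conv_lhs => rw [← Finset.mul_prod_erase Finset.univ _ (Finset.mem_univ l)]
  conv_rhs => rw [← Finset.mul_prod_erase Finset.univ _ (Finset.mem_univ l)]
  have herase : ∀ j ∈ Finset.univ.erase l,
      RatFunc.C (fall (lam j) (((ν + Pi.single l.succ 1 : Fin (s + 1) → ℕ)) j.succ)) *
        (RatFunc.X - RatFunc.C (γ j)) ^ (-(((ν + Pi.single l.succ 1 : Fin (s + 1) → ℕ)) j.succ : ℤ))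
      = RatFunc.C (fall (lam j) (ν j.succ)) *
        (RatFunc.X - RatFunc.C (γ j)) ^ (-(ν j.succ : ℤ)) := by
    intro j hj
    have hjl : j ≠ l := (Finset.mem_erase.1 hj).1
    have h : ((ν + Pi.single l.succ 1 : Fin (s + 1) → ℕ)) j.succ = ν j.succ := by
      simp [Pi.single_apply, Fin.succ_inj, hjl]
    rw [h]
  rw [Finset.prod_congr rfl herase]
  have hl : ((ν + Pi.single l.succ 1 : Fin (s + 1) → ℕ)) l.succ = ν l.succ + 1 := by simp
  rw [hl]
  have hfall : fall (lam l) (ν l.succ + 1) = fall (lam l) (ν l.succ) * (lam l - (ν l.succ : ℚ)) :=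
    rfl
  have hzpow : (RatFunc.X - RatFunc.C (γ l)) ^ (-((ν l.succ : ℕ) + 1 : ℤ)) =
      (RatFunc.X - RatFunc.C (γ l)) ^ (-(ν l.succ : ℤ)) * (RatFunc.X - RatFunc.C (γ l))⁻¹ := by
    have : (-((ν l.succ : ℕ) + 1 : ℤ)) = (-(ν l.succ : ℤ)) + (-1) := by ring
    rw [this, zpow_add₀ (u_ne_zero (γ l)), zpow_neg_one]
  rw [hfall, map_mul]
  push_cast [hzpow]
  ring

lemma dP (hd : d RatFunc.X = 1) (ν : Fin (s + 1) → ℕ) :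
    d (Pfun lam γ ν) = ∑ l : Fin s, Pfun lam γ ν *
      (-(ν l.succ : RatFunc ℚ) * (RatFunc.X - RatFunc.C (γ l))⁻¹) := by
  unfold Pfun
  rw [d_prod]
  refine Finset.sum_congr rfl fun l _ => ?_
  rw [dF d hd]
  conv_rhs => rw [← Finset.mul_prod_erase Finset.univ _ (Finset.mem_univ l)]
  ring

lemma Dstep (D : RatFunc ℚ → RatFunc ℚ)
    (hD : ∀ f, D f = d f +
      (∑ l, RatFunc.C (lam l) / (RatFunc.X - RatFunc.C (γ l))) * f)
    (hd : d RatFunc.X = 1) (ν : Fin (s + 1) → ℕ) (g : RatFunc ℚ) :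
    D (Pfun lam γ ν * g) = Pfun lam γ ν * d g +
      ∑ l : Fin s, Pfun lam γ (ν + Pi.single l.succ 1 : Fin (s + 1) → ℕ) * g := by
  rw [hD, Derivation.leibniz, smul_eq_mul, smul_eq_mul, dP lam γ d hd,
    Finset.mul_sum, Finset.sum_mul, add_assoc, ← Finset.sum_add_distrib]
  congr 1
  refine Finset.sum_congr rfl fun l _ => ?_
  rw [P_single_succ, map_sub, map_natCast, div_eq_mul_inv]
  ring

lemma DCmul (D : RatFunc ℚ → RatFunc ℚ)
    (hD : ∀ f, D f = d f +
      (∑ l, RatFunc.C (lam l) / (RatFunc.X - RatFunc.C (γ l))) * f)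
    (a : ℚ) (x : RatFunc ℚ) : D (RatFunc.C a * x) = RatFunc.C a * D x := by
  rw [hD, hD, dCmul]
  ring

lemma Dsum (D : RatFunc ℚ → RatFunc ℚ)
    (hD : ∀ f, D f = d f +
      (∑ l, RatFunc.C (lam l) / (RatFunc.X - RatFunc.C (γ l))) * f)
    {ι : Type*} (t : Finset ι) (F : ι → RatFunc ℚ) :
    D (∑ i ∈ t, F i) = ∑ i ∈ t, D (F i) := by
  classical
  induction t using Finset.induction_on with
  | empty => rw [Finset.sum_empty, Finset.sum_empty, hD]; simp
  | @insert a t ha ih =>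
    rw [Finset.sum_insert ha, Finset.sum_insert ha, ← ih, hD, hD, hD]
    rw [map_add]
    ring

end Stmt4Aux

open Stmt4Aux in
/-- for the operator `D f = f' + ∑_l (λ_l/(z-γ_l))·f` on `ℚ(z)` with
pairwise distinct `γ_l`, one has for `n ≥ 1`
`Dⁿ f = ∑_{n₀+n₁+⋯+n_s=n} (n!/(n₀!⋯n_s!)) ∏_l ⟨λ_l⟩_{n_l}(z-γ_l)^{-n_l} · f^{(n₀)}`.
The tuple `(n₀,n₁,…,n_s)` is encoded as `ν : Fin (s+1) → ℕ` with `ν 0 = n₀` and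
`ν l.succ = n_l`. -/
theorem stmt_4 {s : ℕ} (lam γ : Fin s → ℚ) (hγ : Function.Injective γ)
    (d : Derivation ℚ (RatFunc ℚ) (RatFunc ℚ)) (hd : d RatFunc.X = 1)
    (D : RatFunc ℚ → RatFunc ℚ)
    (hD : ∀ f, D f = d f + (∑ l, RatFunc.C (lam l) / (RatFunc.X - RatFunc.C (γ l))) * f)
    (n : ℕ) (hn : 1 ≤ n) (f : RatFunc ℚ) :
    D^[n] f = ∑ ν ∈ Finset.Nat.antidiagonalTuple (s + 1) n,
      RatFunc.C ((n.factorial : ℚ) / ∏ i, ((ν i).factorial : ℚ)) *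
        (∏ l : Fin s, RatFunc.C (fall (lam l) (ν l.succ)) *
          (RatFunc.X - RatFunc.C (γ l)) ^ (-(ν l.succ : ℤ))) *
        (⇑d)^[ν 0] f := by
  clear hn hγ
  have smulC : ∀ (a : ℚ) (x : RatFunc ℚ), a • x = RatFunc.C a * x := fun a x => by
    rw [← RatFunc.algebraMap_eq_C]
    exact @Algebra.smul_def ℚ (RatFunc ℚ) _ _ (RatFunc.instAlgebraOfPolynomial ℚ ℚ) a x
  induction n with
  | zero =>
    rw [Function.iterate_zero_apply, Finset.Nat.antidiagonalTuple_zero_right,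
      Finset.sum_singleton]
    simp [fall]
  | succ n ih =>
    rw [Function.iterate_succ_apply', ih, Dsum lam γ d D hD]
    have hterm : ∀ ν : Fin (s + 1) → ℕ,
        D (RatFunc.C ((n.factorial : ℚ) / ∏ i, ((ν i).factorial : ℚ)) *
            Pfun lam γ ν * (⇑d)^[ν 0] f)
        = ∑ i : Fin (s + 1),
            RatFunc.C ((n.factorial : ℚ) / ∏ j, ((ν j).factorial : ℚ)) *
              (Pfun lam γ (ν + Pi.single i 1 : Fin (s + 1) → ℕ) *
                (⇑d)^[(ν + Pi.single i 1 : Fin (s + 1) → ℕ) 0] f) := by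
      intro ν
      rw [mul_assoc, DCmul lam γ d D hD, Dstep lam γ d D hD hd, Fin.sum_univ_succ]
      rw [P_single_zero, comp_single_zero, Function.iterate_succ_apply' (⇑d) (ν 0) f]
      rw [mul_add, Finset.mul_sum]
      congr 1
    calc ∑ ν ∈ Finset.Nat.antidiagonalTuple (s + 1) n,
          D (RatFunc.C ((n.factorial : ℚ) / ∏ i, ((ν i).factorial : ℚ)) *
            Pfun lam γ ν * (⇑d)^[ν 0] f)
        = ∑ i : Fin (s + 1), ∑ ν ∈ Finset.Nat.antidiagonalTuple (s + 1) n,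
            ((n.factorial : ℚ) / ∏ j, ((ν j).factorial : ℚ)) •
              (Pfun lam γ (ν + Pi.single i 1 : Fin (s + 1) → ℕ) *
                (⇑d)^[(ν + Pi.single i 1 : Fin (s + 1) → ℕ) 0] f) := by
          rw [Finset.sum_comm]
          refine Finset.sum_congr rfl fun ν _ => ?_
          rw [hterm ν]
          exact Finset.sum_congr rfl fun i _ => (smulC _ _).symm
      _ = ∑ μ ∈ Finset.Nat.antidiagonalTuple (s + 1) (n + 1),
            (((n + 1).factorial : ℚ) / ∏ j, ((μ j).factorial : ℚ)) •
              (Pfun lam γ μ * (⇑d)^[μ 0] f) :=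
          @comb _ _ (RatFunc ℚ) _ (RatFunc.instAlgebraOfPolynomial ℚ ℚ).toModule (fun μ => Pfun lam γ μ * (⇑d)^[μ 0] f)
      _ = _ := by
          refine Finset.sum_congr rfl fun μ _ => ?_
          rw [smulC, ← mul_assoc]
          rfl
end

section
/- Let K be a number field with ring of integers O_K, let A be an m×m matrix with entries in K, and let T be an invertible m×m matrix with entries in K. Suppose A satisfies the condition of cancellation of factorials with constant Ψ ≥ 1, i.e. there exist positive integers (ψ_k)_{k∈ℕ} such that all entries of ψ_k·⟨A⟩_n/n! lie in O_K for all 0 ≤ n ≤ k and limsup_{k→∞} ψ_k^{1/k} ≤ Ψ. Then the matrix T·A·T^{−1} also satisfies the condition of cancellation of factorials with the same constant Ψ: there exist positive integers (ψ′_k)_{k∈ℕ} (one may take ψ′_k = t_1 t_2 ψ_k, where t_1, t_2 are least common denominators of the entries of T and T^{−1} respectively) such that all entries of ψ′_k·⟨TAT^{−1}⟩_n/n! lie in O_K for all 0 ≤ n ≤ k and limsup_{k→∞} (ψ′_k)^{1/k} ≤ Ψ. -/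
open Filter Topology

theorem fall_conj {R : Type*} [Ring R] {t s : R} (hts : t * s = 1) (hst : s * t = 1) (a : R) :
    ∀ n, fall (t * a * s) n = t * fall a n * s
  | 0 => by simp [fall, hts]
  | n + 1 => by
    have hsub : t * a * s - n = t * (a - n) * s := by
      rw [mul_sub, sub_mul, ← Nat.cast_comm, mul_assoc (n : R), hts, mul_one]
    rw [fall, fall, fall_conj hts hst a n, hsub]
    simp only [mul_assoc, ← mul_assoc s t, hst, one_mul]

theorem NumberField.exists_nat_mul_isIntegral {K ι : Type*} [Field K] [NumberField K] [Fintype ι]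
    (f : ι → K) : ∃ d : ℕ, 0 < d ∧ ∀ i, IsIntegral ℤ (d * f i) := by
  classical
  obtain ⟨y, hy, hint⟩ := exists_integral_multiples ℤ ℚ (Finset.univ.image f)
  refine ⟨y.natAbs, Int.natAbs_pos.mpr hy, fun i => ?_⟩
  have hyf : IsIntegral ℤ (y • f i) := hint _ (Finset.mem_image_of_mem f (Finset.mem_univ i))
  have : (y.natAbs : K) * f i = y.sign * (y • f i) := by
    rw [zsmul_eq_mul, ← mul_assoc, ← Int.cast_mul, Int.sign_mul_self, Int.cast_natCast]
  simpa only [this] using (isIntegral_intCast y.sign).mul hyf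

theorem Matrix.isIntegral_mul_apply {R A ι : Type*} [CommRing R] [CommRing A] [Algebra R A]
    [Fintype ι] {M N : Matrix ι ι A} (hM : ∀ i j, IsIntegral R (M i j))
    (hN : ∀ i j, IsIntegral R (N i j)) (i j : ι) : IsIntegral R ((M * N) i j) :=
  IsIntegral.sum _ fun k _ => (hM i k).mul (hN k j)

theorem limsup_mul_le_of_tendsto_one {ι : Type*} {l : Filter ι} [l.NeBot] {u v : ι → ℝ}
    (hu : Tendsto u l (𝓝 1)) (hu1 : ∀ x, 1 ≤ u x) (hv : ∀ x, 0 ≤ v x) :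
    limsup (u * v) l ≤ limsup v l := by
  have hv_le : ∀ᶠ x in l, v x ≤ (u * v) x :=
    Eventually.of_forall fun x => le_mul_of_one_le_left (hv x) (hu1 x)
  by_cases hvb : IsBoundedUnder (· ≤ ·) l v
  · calc limsup (u * v) l ≤ limsup u l * limsup v l :=
          limsup_mul_le (Frequently.of_forall fun x => zero_le_one.trans (hu1 x))
            hu.isBoundedUnder_le (Eventually.of_forall hv) hvb
      _ = limsup v l := by rw [hu.limsup_eq, one_mul]
  · -- both limsups are then the junk value `0` of an unbounded `limsup` in `ℝ`
    have huvb : ¬IsBoundedUnder (· ≤ ·) l (u * v) := fun h => hvb (h.mono_le hv_le)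
    rw [Real.limsup_of_not_isBoundedUnder hvb, Real.limsup_of_not_isBoundedUnder huvb]

theorem limsup_nat_mul_rpow_one_div_le (d : ℕ) (hd : 0 < d) (x : ℕ → ℕ) :
    limsup (fun k => ((d * x k : ℕ) : ℝ) ^ (1 / (k : ℝ))) atTop
      ≤ limsup (fun k => (x k : ℝ) ^ (1 / (k : ℝ))) atTop := by
  have hd1 : (1 : ℝ) ≤ d := by exact_mod_cast hd
  have hroot : Tendsto (fun k : ℕ => (d : ℝ) ^ (1 / (k : ℝ))) atTop (𝓝 1) := by
    simpa using tendsto_const_nhds.rpow tendsto_one_div_atTop_nhds_zero_nat (.inl (by positivity))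
  convert limsup_mul_le_of_tendsto_one (v := fun k => (x k : ℝ) ^ (1 / (k : ℝ))) hroot
    (fun k => Real.one_le_rpow hd1 (by positivity)) (fun k => by positivity) using 2
  ext k
  rw [Pi.mul_apply, Nat.cast_mul]
  exact Real.mul_rpow (by positivity) (by positivity)

theorem stmt_6_general (K : Type*) [Field K] [NumberField K] {m : ℕ}
    (A T : Matrix (Fin m) (Fin m) K) (hT : IsUnit T.det)
    (Ψ : ℝ)
    (ψ : ℕ → ℕ) (hpos : ∀ k, 0 < ψ k)
    (hint : ∀ k : ℕ, ∀ n ≤ k, ∀ i j,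
      IsIntegral ℤ ((ψ k : K) * fall A n i j / (n.factorial : K)))
    (hlim : Filter.limsup (fun k => (ψ k : ℝ) ^ (1 / (k : ℝ))) Filter.atTop ≤ Ψ) :
    ∃ ψ' : ℕ → ℕ, (∀ k, 0 < ψ' k) ∧
      (∀ k : ℕ, ∀ n ≤ k, ∀ i j,
        IsIntegral ℤ ((ψ' k : K) * fall (T * A * T⁻¹) n i j / (n.factorial : K))) ∧
      Filter.limsup (fun k => (ψ' k : ℝ) ^ (1 / (k : ℝ))) Filter.atTop ≤ Ψ := by
  obtain ⟨d₁, hd₁, hT₁⟩ := NumberField.exists_nat_mul_isIntegral fun p : Fin m × Fin m => T p.1 p.2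
  obtain ⟨d₂, hd₂, hT₂⟩ :=
    NumberField.exists_nat_mul_isIntegral fun p : Fin m × Fin m => T⁻¹ p.1 p.2
  refine ⟨fun k => d₁ * d₂ * ψ k, fun k => by have := hpos k; positivity, fun k n hn i j => ?_,
    (limsup_nat_mul_rpow_one_div_le _ (by positivity) ψ).trans hlim⟩
  have hconj : (((d₁ * d₂ * ψ k : ℕ) : K) * fall (T * A * T⁻¹) n i j / n.factorial) =
      (((d₁ : K) • T) * (((ψ k : K) / n.factorial) • fall A n) * ((d₂ : K) • T⁻¹)) i j := by
    rw [fall_conj (Matrix.mul_nonsing_inv T hT) (Matrix.nonsing_inv_mul T hT)]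
    simp only [Matrix.smul_mul, Matrix.mul_smul, smul_smul, Matrix.smul_apply, smul_eq_mul]
    push_cast
    ring
  rw [hconj]
  refine Matrix.isIntegral_mul_apply (Matrix.isIntegral_mul_apply ?_ ?_) ?_ i j
  · exact fun a b => by simpa using hT₁ (a, b)
  · exact fun a b => by simpa [mul_div_right_comm] using hint k n hn a b
  · exact fun a b => by simpa using hT₂ (a, b)

/-- if a square matrix `A` over a number field `K` satisfies the condition of
cancellation of factorials with constant `Ψ ≥ 1`, then so does `T·A·T⁻¹` for any invertible
matrix `T` over `K`. -/
theorem stmt_6 (K : Type*) [Field K] [NumberField K] {m : ℕ}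
    (A T : Matrix (Fin m) (Fin m) K) (hT : IsUnit T.det)
    (Ψ : ℝ) (hΨ : 1 ≤ Ψ)
    (ψ : ℕ → ℕ) (hpos : ∀ k, 0 < ψ k)
    (hint : ∀ k : ℕ, ∀ n ≤ k, ∀ i j,
      IsIntegral ℤ ((ψ k : K) * fall A n i j / (n.factorial : K)))
    (hlim : Filter.limsup (fun k => (ψ k : ℝ) ^ (1 / (k : ℝ))) Filter.atTop ≤ Ψ) :
    ∃ ψ' : ℕ → ℕ, (∀ k, 0 < ψ' k) ∧
      (∀ k : ℕ, ∀ n ≤ k, ∀ i j,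
        IsIntegral ℤ ((ψ' k : K) * fall (T * A * T⁻¹) n i j / (n.factorial : K))) ∧
      Filter.limsup (fun k => (ψ' k : ℝ) ^ (1 / (k : ℝ))) Filter.atTop ≤ Ψ :=
  stmt_6_general K A T hT Ψ ψ hpos hint hlim
end

section
/- Let λ ∈ ℚ, b = den λ, and r ≥ 1 an integer. For n ∈ ℕ, let Δ_n(X) = ⟨X⟩_n/n! ∈ ℚ[X] and let Δ_n^{(j)} denote the j-th derivative of this polynomial. Then for every k ≥ 1, the integer b^k · d_k^{r−1} · ∏_{p prime, p ∣ b} p^{τ_p(k)} is a common denominator of all the rational numbers Δ_n^{(j)}(λ)/j! for 0 ≤ j ≤ r−1 and 0 ≤ n ≤ k; that is, b^k · d_k^{r−1} · ∏_{p ∣ b} p^{τ_p(k)} · Δ_n^{(j)}(λ)/j! ∈ ℤ for all such j, n. -/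
/-!
Write `λ = a / b` with `b = den λ`. Since `⟨X⟩_n = ∏_{i<n} (X - i)`, Vieta's formula applied to
the Taylor expansion at `λ` gives `Δ_n^{(j)}(λ) / j! = (1 / n!) ∑_S ∏_{i ∈ S} (λ - i)`, the sum
running over the `(n - j)`-subsets `S` of `{0, …, n - 1}`, and
`∏_{i ∈ S} (λ - i) = ∏_{i ∈ S} (a - i b) / b^{n-j}`. So it suffices that `n!` divides
`d_k^{r-1} ∏_{p ∣ b} p^{τ_p(k)} ∏_{i ∈ S} (a - i b)`, which is checked prime by prime. For `p ∣ b`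
the factor `p^{τ_p(k)}` already absorbs `p^{τ_p(n)}`. For `p ∤ b`, at least `⌊n / p^m⌋` of the `n`
numbers `a - i b`, `i < n`, are divisible by `p^m`, and leaving out the `j` indices outside `S`
loses at most `j` of them for each `m ≤ log_p n`; by Legendre's formula
`v_p(n!) ≤ v_p(∏_{i ∈ S} (a - i b)) + j log_p n`, and `j log_p n ≤ (r - 1) v_p(d_k)`.
-/

open Polynomial Finset
open scoped Nat

namespace Polynomial

variable {R : Type*} [CommRing R]

theorem taylor_descPochhammer (x : R) (n : ℕ) :
    taylor x (descPochhammer R n) = ∏ i ∈ range n, (X + C (x - i)) := by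
  rw [taylor_apply, comp, ← eval_map, descPochhammer_map, descPochhammer_eval_eq_prod_range]
  simp only [map_sub, map_natCast, add_sub_assoc]

theorem eval_hasseDeriv_descPochhammer (x : R) {j n : ℕ} (hj : j ≤ n) :
    (hasseDeriv j (descPochhammer R n)).eval x =
      ∑ S ∈ (range n).powersetCard (n - j), ∏ i ∈ S, (x - i) := by
  rw [← taylor_coeff, taylor_descPochhammer, prod_X_add_C_coeff _ _ (by simpa), card_range]

end Polynomial

theorem Finset.card_filter_le_card_filter_add_card_sdiff {α : Type*} [DecidableEq α]
    {s t : Finset α} (P : α → Prop) [DecidablePred P] :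
    #{x ∈ t | P x} ≤ #{x ∈ s | P x} + #(t \ s) :=
  calc #{x ∈ t | P x} ≤ #({x ∈ s | P x} ∪ (t \ s)) :=
        card_le_card fun x hx => by
          simp only [mem_filter, mem_union, mem_sdiff] at hx ⊢
          tauto
    _ ≤ _ := card_union_le _ _

theorem div_le_card_filter_range_dvd_sub_mul (a : ℤ) {b q : ℕ} (hq : 0 < q) (hbq : b.Coprime q)
    (n : ℕ) : n / q ≤ #{i ∈ range n | (q : ℤ) ∣ a - (i : ℕ) * b} := by
  obtain ⟨v, hv⟩ : ∃ v : ℕ, (q : ℤ) ∣ a - v * b := by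
    have : NeZero q := ⟨hq.ne'⟩
    set u := ZMod.unitOfCoprime b hbq
    refine ⟨((a : ZMod q) * u⁻¹ : ZMod q).val, ?_⟩
    rw [← ZMod.intCast_zmod_eq_zero_iff_dvd]
    push_cast
    rw [ZMod.natCast_zmod_val, show (b : ZMod q) = u from rfl, mul_assoc, Units.inv_mul, mul_one,
      sub_self]
  calc n / q ≤ n.count (· ≡ v [MOD q]) := by rw [Nat.count_modEq_card _ hq]; omega
    _ = #{i ∈ range n | i ≡ v [MOD q]} := Nat.count_eq_card_filter_range _ _
    _ ≤ _ := by
      refine card_le_card (monotone_filter_right _ fun i _ hi => ?_)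
      have hvi : (q : ℤ) ∣ v - i := Nat.modEq_iff_dvd.1 hi
      rw [show a - i * b = (a - v * b) + (v - i) * b by ring]
      exact dvd_add hv (dvd_mul_of_dvd_left hvi _)

theorem Nat.card_filter_pow_dvd_le_factorization {p x : ℕ} (hp : p.Prime) (hx : x ≠ 0) (c : ℕ) :
    #{m ∈ Ico 1 c | p ^ m ∣ x} ≤ x.factorization p := by
  rw [factorization_eq_card_pow_dvd x hp]
  refine card_le_card fun m hm => ?_
  simp only [mem_filter, mem_Ico] at hm ⊢
  exact ⟨⟨hm.1.1, Nat.lt_of_pow_dvd_right hx hp.two_le hm.2⟩, hm.2⟩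

theorem sum_card_filter_pow_dvd_le_factorization_prod {ι : Type*} {s : Finset ι} {f : ι → ℤ}
    (hf : ∀ i ∈ s, f i ≠ 0) {p : ℕ} (hp : p.Prime) (c : ℕ) :
    ∑ m ∈ Ico 1 c, #{i ∈ s | ((p ^ m : ℕ) : ℤ) ∣ f i} ≤
      (∏ i ∈ s, f i).natAbs.factorization p :=
  calc ∑ m ∈ Ico 1 c, #{i ∈ s | ((p ^ m : ℕ) : ℤ) ∣ f i}
      = ∑ i ∈ s, #{m ∈ Ico 1 c | p ^ m ∣ (f i).natAbs} := by
        simp only [card_filter, Int.natCast_dvd]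
        exact sum_comm
    _ ≤ ∑ i ∈ s, (f i).natAbs.factorization p := sum_le_sum fun i hi =>
        Nat.card_filter_pow_dvd_le_factorization hp (Int.natAbs_ne_zero.2 (hf i hi)) c
    _ = _ := by
        rw [show (∏ i ∈ s, f i).natAbs = ∏ i ∈ s, (f i).natAbs from map_prod Int.natAbsHom f s,
          Nat.factorization_prod fun i hi => Int.natAbs_ne_zero.2 (hf i hi),
          Finset.sum_apply']

theorem factorization_factorial_le_of_not_dvd {a : ℤ} {b p n j : ℕ} (hp : p.Prime)
    (hpb : ¬ p ∣ b) {S : Finset ℕ} (hS : n ≤ #S + j) (hSn : S ⊆ range n)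
    (hA : ∀ i ∈ S, a - i * b ≠ 0) :
    (n !).factorization p ≤ (∏ i ∈ S, (a - i * b)).natAbs.factorization p + j * p.log n := by
  have hcount : ∀ m, n / p ^ m ≤ #{i ∈ S | ((p ^ m : ℕ) : ℤ) ∣ a - (i : ℕ) * b} + j := fun m =>
    calc n / p ^ m ≤ #{i ∈ range n | ((p ^ m : ℕ) : ℤ) ∣ a - (i : ℕ) * b} :=
          div_le_card_filter_range_dvd_sub_mul a (pow_pos hp.pos m)
            (Nat.Coprime.pow_right m (hp.coprime_iff_not_dvd.2 hpb).symm) n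
      _ ≤ _ := by
          grw [card_filter_le_card_filter_add_card_sdiff (s := S), card_sdiff_of_subset hSn,
            card_range]
          omega
  calc (n !).factorization p = ∑ m ∈ Ico 1 (p.log n + 1), n / p ^ m :=
        Nat.factorization_factorial hp (lt_add_one _)
    _ ≤ ∑ m ∈ Ico 1 (p.log n + 1), (#{i ∈ S | ((p ^ m : ℕ) : ℤ) ∣ a - (i : ℕ) * b} + j) :=
        sum_le_sum fun m _ => hcount m
    _ ≤ _ := by
        rw [sum_add_distrib, sum_const, Nat.card_Ico, add_tsub_cancel_right, smul_eq_mul, mul_comm]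
        grw [sum_card_filter_pow_dvd_le_factorization_prod hA hp]

theorem factorization_factorial_le_tau {n k : ℕ} (hn : n ≤ k) (p : ℕ) :
    (n !).factorization p ≤ tau p k :=
  (Nat.factorization_le_iff_dvd n.factorial_ne_zero k.factorial_ne_zero).2
    (Nat.factorial_dvd_factorial hn) p

theorem tau_le_factorization_prod_primeFactors {b p : ℕ} (hp : p ∈ b.primeFactors) (k : ℕ) :
    tau p k ≤ (∏ q ∈ b.primeFactors, q ^ tau q k).factorization p :=
  ((Nat.prime_of_mem_primeFactors hp).pow_dvd_iff_le_factorization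
    (prod_ne_zero_iff.2 fun _ hq => pow_ne_zero _ (Nat.prime_of_mem_primeFactors hq).ne_zero)).1
    (dvd_prod_of_mem _ hp)

theorem factorial_dvd_lcmUpto_pow_mul_prod {a : ℤ} {b k n j r : ℕ} (hb : b ≠ 0) (hn : n ≤ k)
    (hjr : j ≤ r) {S : Finset ℕ} (hS : n ≤ #S + j) (hSn : S ⊆ range n) :
    (n ! : ℤ) ∣ ((Nat.lcmUpto k ^ r * ∏ p ∈ b.primeFactors, p ^ tau p k : ℕ) : ℤ) *
      ∏ i ∈ S, (a - i * b) := by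
  obtain h0 | hP := eq_or_ne (∏ i ∈ S, (a - i * b)) 0
  · rw [h0, mul_zero]
    exact dvd_zero _
  have hL : Nat.lcmUpto k ^ r ≠ 0 := pow_ne_zero _ (Nat.lcmUpto_ne_zero k)
  have hD : ∏ p ∈ b.primeFactors, p ^ tau p k ≠ 0 :=
    prod_ne_zero_iff.2 fun _ hq => pow_ne_zero _ (Nat.prime_of_mem_primeFactors hq).ne_zero
  have hA : ∀ i ∈ S, a - i * b ≠ 0 := prod_ne_zero_iff.1 hP
  rw [Int.natCast_dvd, Int.natAbs_mul, Int.natAbs_natCast]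
  replace hP := Int.natAbs_ne_zero.2 hP
  refine (Nat.factorization_prime_le_iff_dvd n.factorial_ne_zero
    (mul_ne_zero (mul_ne_zero hL hD) hP)).1 fun p hp => ?_
  rw [Nat.factorization_mul (mul_ne_zero hL hD) hP, Nat.factorization_mul hL hD,
    Nat.factorization_pow]
  simp only [Finsupp.add_apply, Finsupp.smul_apply, smul_eq_mul, Nat.factorization_lcmUpto k hp]
  by_cases hpb : p ∣ b
  · have hτ := tau_le_factorization_prod_primeFactors (Nat.mem_primeFactors.2 ⟨hp, hpb, hb⟩) k
    have hfac := factorization_factorial_le_tau hn p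
    omega
  · have hfac := factorization_factorial_le_of_not_dvd hp hpb hS hSn hA
    have hlog : j * p.log n ≤ r * p.log k := Nat.mul_le_mul hjr (Nat.log_mono_right hn)
    omega

theorem prod_sub_natCast_eq_div (q : ℚ) (S : Finset ℕ) :
    ∏ i ∈ S, (q - i) = ((∏ i ∈ S, (q.num - i * q.den) : ℤ) : ℚ) / (q.den : ℚ) ^ #S := by
  rw [Int.cast_prod, ← prod_const, ← prod_div_distrib]
  refine prod_congr rfl fun i _ => ?_
  push_cast
  rw [sub_div, mul_div_cancel_right₀ _ (by positivity), Rat.num_div_den]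

theorem den_pow_mul_prod_sub_natCast_div_factorial_mem {q : ℚ} {k n j r : ℕ} (hn : n ≤ k)
    (hjr : j ≤ r) {S : Finset ℕ} (hS : n ≤ #S + j) (hSn : S ⊆ range n) :
    (q.den : ℚ) ^ k * (Nat.lcmUpto k : ℚ) ^ r * (∏ p ∈ q.den.primeFactors, (p : ℚ) ^ tau p k) *
      (∏ i ∈ S, (q - i)) / n ! ∈ (⊥ : Subring ℚ) := by
  obtain ⟨z, hz⟩ := factorial_dvd_lcmUpto_pow_mul_prod (a := q.num) q.den_ne_zero hn hjr hS hSn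
  have hk : (q.den : ℚ) ^ k = q.den ^ (k - #S) * q.den ^ #S := by
    rw [← pow_add, Nat.sub_add_cancel ((card_le_card hSn).trans (by simpa))]
  refine Subring.mem_bot.2 ⟨q.den ^ (k - #S) * z, ?_⟩
  have hzq := congrArg (Int.cast : ℤ → ℚ) hz
  push_cast at hzq
  rw [prod_sub_natCast_eq_div, hk]
  push_cast
  field_simp
  linear_combination -hzq

theorem stmt_7_general (lam : ℚ) (b : ℕ) (hb : b = lam.den) (r : ℕ)
    (k : ℕ) (j n : ℕ) (hj : j ≤ r - 1) (hn : n ≤ k) :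
    ∃ z : ℤ,
      ((b : ℚ) ^ k * (((Finset.Icc 1 k).lcm id : ℕ) : ℚ) ^ (r - 1) *
          ∏ p ∈ b.primeFactors, (p : ℚ) ^ tau p k) *
        Polynomial.eval lam
          ((fun Q : Polynomial ℚ => Polynomial.derivative Q)^[j]
            ((Nat.factorial n : ℚ)⁻¹ • descPochhammer ℚ n)) / (j.factorial : ℚ)
      = (z : ℚ) := by
  subst hb
  obtain hnj | hjn := lt_or_ge n j
  · refine ⟨0, ?_⟩
    rw [iterate_derivative_eq_zero, eval_zero, mul_zero, zero_div, Int.cast_zero]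
    exact (natDegree_smul_le _ _).trans_lt (by rwa [descPochhammer_natDegree])
  suffices h : (lam.den : ℚ) ^ k * (Nat.lcmUpto k : ℚ) ^ (r - 1) *
      (∏ p ∈ lam.den.primeFactors, (p : ℚ) ^ tau p k) *
      (∑ S ∈ (range n).powersetCard (n - j), ∏ i ∈ S, (lam - i)) / n ! ∈ (⊥ : Subring ℚ) by
    obtain ⟨z, hz⟩ := Subring.mem_bot.1 h
    refine ⟨z, ?_⟩
    rw [hz, ← factorial_smul_hasseDeriv, LinearMap.smul_apply, map_smul, eval_smul, eval_smul,
      eval_hasseDeriv_descPochhammer _ hjn, Nat.lcmUpto, nsmul_eq_mul, smul_eq_mul]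
    field_simp
  rw [mul_sum, sum_div]
  refine Subring.sum_mem _ fun S hS => ?_
  rw [mem_powersetCard] at hS
  exact den_pow_mul_prod_sub_natCast_div_factorial_mem hn hj (by omega) hS.1

/-- for `λ ∈ ℚ` with `b = den λ` and `r ≥ 1`, the integer
`b^k · d_k^{r-1} · ∏_{p ∣ b} p^{τ_p(k)}` (where `d_k = lcm(1,…,k)`) is a common
denominator of all numbers `Δ_n^{(j)}(λ)/j!` with `0 ≤ j ≤ r-1`, `0 ≤ n ≤ k`, where
`Δ_n(X) = ⟨X⟩_n/n!`. -/
theorem stmt_7 (lam : ℚ) (b : ℕ) (hb : b = lam.den) (r : ℕ) (hr : 1 ≤ r)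
    (k : ℕ) (hk : 1 ≤ k) (j n : ℕ) (hj : j ≤ r - 1) (hn : n ≤ k) :
    ∃ z : ℤ,
      ((b : ℚ) ^ k * (((Finset.Icc 1 k).lcm id : ℕ) : ℚ) ^ (r - 1) *
          ∏ p ∈ b.primeFactors, (p : ℚ) ^ tau p k) *
        Polynomial.eval lam
          ((fun Q : Polynomial ℚ => Polynomial.derivative Q)^[j]
            ((Nat.factorial n : ℚ)⁻¹ • descPochhammer ℚ n)) / (j.factorial : ℚ)
      = (z : ℚ) :=
  stmt_7_general lam b hb r k j n hj hn
end

section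
/- Let A_1,…,A_s be (not necessarily commuting) m×m matrices over a commutative ring. Define matrices ⟨A_1,…,A_s⟩_{n} for multi-indices n = (n_1,…,n_s) ∈ ℤ^s by: ⟨A_1,…,A_s⟩_n = 0 if some n_l < 0; ⟨A_1,…,A_s⟩_0 = I (identity matrix); and for n ∈ ℕ^s with n ≠ 0, ⟨A_1,…,A_s⟩_{n} = Σ_{l=1}^{s} (A_l − (n_l − 1)I) · ⟨A_1,…,A_s⟩_{n − e_l}, where e_l is the l-th standard basis vector. Then for every k ∈ ℕ: ⟨A_1 + A_2 + ⋯ + A_s⟩_k = Σ_{n ∈ ℕ^s, n_1+⋯+n_s = k} ⟨A_1,…,A_s⟩_n. -/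
/-- let `F n = ⟨A_1,…,A_s⟩_n` be the family of matrices defined by the
recursion `F 0 = I` and, for `n ≠ 0`,
`F n = ∑_l (A_l - (n_l - 1)I)·F (n - e_l)` (where terms with `n_l = 0` vanish, encoding
`⟨⋯⟩_{n-e_l} = 0` for multi-indices with a negative entry).  Then for every `k`,
`⟨A_1+⋯+A_s⟩_k = ∑_{|n| = k} ⟨A_1,…,A_s⟩_n`. -/
theorem stmt_9 {R : Type*} [CommRing R] {m s : ℕ}
    (A : Fin s → Matrix (Fin m) (Fin m) R)
    (F : (Fin s → ℕ) → Matrix (Fin m) (Fin m) R)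
    (hF0 : F 0 = 1)
    (hFrec : ∀ n : Fin s → ℕ, n ≠ 0 →
      F n = ∑ l, if n l = 0 then 0 else
        (A l - ((n l - 1 : ℕ) : Matrix (Fin m) (Fin m) R)) *
          F (Function.update n l (n l - 1)))
    (k : ℕ) :
    fall (∑ l, A l) k = ∑ n ∈ Finset.Nat.antidiagonalTuple s k, F n := by
  set S : Matrix (Fin m) (Fin m) R := ∑ l, A l with hS
  induction k with
  | zero => simp [Finset.Nat.antidiagonalTuple_zero_right, hF0, fall]
  | succ k ih =>
    have hcomm : Commute S (fall S k) := by
      clear ih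
      induction k with
      | zero => simp [fall]
      | succ k ih2 =>
        rw [fall]
        exact ih2.mul_right ((Commute.refl S).sub_right (Nat.cast_commute k S).symm)
    have h2 : Commute (S - (k : Matrix (Fin m) (Fin m) R)) (fall S k) :=
      hcomm.sub_left (Nat.cast_commute k _)
    have key : ∑ n ∈ Finset.Nat.antidiagonalTuple s (k + 1), F n
        = (S - (k : Matrix (Fin m) (Fin m) R)) *
            ∑ n ∈ Finset.Nat.antidiagonalTuple s k, F n := by
      have hne : ∀ n ∈ Finset.Nat.antidiagonalTuple s (k + 1), n ≠ 0 := by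
        intro n hn h0
        rw [Finset.Nat.mem_antidiagonalTuple] at hn
        simp [h0] at hn
      rw [Finset.sum_congr rfl fun n hn => hFrec n (hne n hn), Finset.sum_comm]
      have hl : ∀ l : Fin s,
          (∑ n ∈ Finset.Nat.antidiagonalTuple s (k + 1),
            if n l = 0 then 0 else
              (A l - ((n l - 1 : ℕ) : Matrix (Fin m) (Fin m) R)) *
                F (Function.update n l (n l - 1)))
          = ∑ n ∈ Finset.Nat.antidiagonalTuple s k,
              (A l - ((n l : ℕ) : Matrix (Fin m) (Fin m) R)) * F n := by
        intro l
        have hrw : ∀ n : Fin s → ℕ,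
            (if n l = 0 then 0 else
              (A l - ((n l - 1 : ℕ) : Matrix (Fin m) (Fin m) R)) *
                F (Function.update n l (n l - 1)))
            = (if ¬ n l = 0 then
                (A l - ((n l - 1 : ℕ) : Matrix (Fin m) (Fin m) R)) *
                  F (Function.update n l (n l - 1)) else 0) := by
          intro n; rw [ite_not]
        rw [Finset.sum_congr rfl fun n _ => hrw n, ← Finset.sum_filter]
        refine Finset.sum_nbij' (fun n => Function.update n l (n l - 1))
          (fun n => Function.update n l (n l + 1)) ?_ ?_ ?_ ?_ ?_
        · intro n hn
          simp only [Finset.mem_filter, Finset.Nat.mem_antidiagonalTuple] at hn ⊢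
          obtain ⟨hsum, hnl⟩ := hn
          rw [Finset.sum_update_of_mem (Finset.mem_univ l)]
          rw [Finset.sum_eq_sum_sdiff_singleton_add (Finset.mem_univ l)] at hsum
          omega
        · intro n hn
          simp only [Finset.mem_filter, Finset.Nat.mem_antidiagonalTuple] at hn ⊢
          rw [Finset.sum_update_of_mem (Finset.mem_univ l)]
          rw [Finset.sum_eq_sum_sdiff_singleton_add (Finset.mem_univ l)] at hn
          constructor
          · omega
          · simp
        · intro n hn
          simp only [Finset.mem_filter] at hn
          have : n l - 1 + 1 = n l := by omega
          simp [Function.update_idem, this]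
        · intro n hn
          simp [Function.update_idem]
        · intro n hn
          simp only [Finset.mem_filter] at hn
          simp
      rw [Finset.sum_congr rfl fun l _ => hl l, Finset.sum_comm]
      rw [Finset.mul_sum]
      refine Finset.sum_congr rfl fun n hn => ?_
      rw [← Finset.sum_mul, Finset.sum_sub_distrib, ← hS, ← Nat.cast_sum]
      rw [Finset.Nat.mem_antidiagonalTuple] at hn
      rw [hn]
    rw [show fall S (k + 1) = fall S k * (S - (k : Matrix (Fin m) (Fin m) R)) from rfl,
      ← h2.eq, key, ih]
end

section
/- For k ≥ 1 let g_k denote the least common multiple of all the trinomial coefficients k!/(k_0!·k_1!·k_2!) over all k_0, k_1, k_2 ∈ ℕ with k_0 + k_1 + k_2 = k. Then g_k ≤ e^{2π(k)·log k}, where π(k) is the number of primes not exceeding k; in particular, limsup_{k→∞} g_k^{1/k} ≤ e². -/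
open Nat Finset

/-! ### Elementary numeric facts about floor division -/

private lemma div_decomp13 (n c d q r : ℕ) (hc : 0 < c) (hn : n = c * d * q + r) :
    n / c = r / c + d * q := by
  subst hn; rw [show c * d * q + r = r + c * (d * q) by ring, Nat.add_mul_div_left _ _ hc]

private lemma div235_le13 (n : ℕ) : n / 2 + n / 3 + n / 5 ≤ n + n / 30 := by
  set q := n / 30 with hq
  set r := n % 30 with hr
  have hn : n = 30 * q + r := (Nat.div_add_mod n 30).symm
  have e2 : n / 2 = r / 2 + 15 * q := div_decomp13 n 2 15 q r (by norm_num) (by omega)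
  have e3 : n / 3 = r / 3 + 10 * q := div_decomp13 n 3 10 q r (by norm_num) (by omega)
  have e5 : n / 5 = r / 5 + 6 * q := div_decomp13 n 5 6 q r (by norm_num) (by omega)
  have hrlt : r < 30 := Nat.mod_lt _ (by norm_num)
  have key : r / 2 + r / 3 + r / 5 ≤ r := by interval_cases r <;> simp
  omega

/-- the Chebyshev-type step function -/
private def cc13 (n : ℕ) : ℕ := (n + n / 30) - (n / 2 + n / 3 + n / 5)

private lemma cc13_add (n : ℕ) : cc13 n + (n / 2 + n / 3 + n / 5) = n + n / 30 := by
  have := div235_le13 n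
  unfold cc13; omega

private lemma u_le13 (n : ℕ) : (n - n/2 - n/3) + n/30 ≤ n/5 + 1 := by
  set q := n / 30 with hq
  set r := n % 30 with hr
  have hn : n = 30 * q + r := (Nat.div_add_mod n 30).symm
  have e2 : n / 2 = r / 2 + 15 * q := div_decomp13 n 2 15 q r (by norm_num) (by omega)
  have e3 : n / 3 = r / 3 + 10 * q := div_decomp13 n 3 10 q r (by norm_num) (by omega)
  have e5 : n / 5 = r / 5 + 6 * q := div_decomp13 n 5 6 q r (by norm_num) (by omega)
  have hrlt : r < 30 := Nat.mod_lt _ (by norm_num)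
  have key : (r - r/2 - r/3) ≤ r/5 + 1 := by interval_cases r <;> simp
  omega

private lemma m5_ge13 (n : ℕ) : 6 * (n / 30) ≤ n / 5 := by
  have e5 : n / 5 = (n % 30) / 5 + 6 * (n / 30) :=
    div_decomp13 n 5 6 (n/30) (n % 30) (by norm_num) (by omega)
  omega

private lemma third_le13 (n : ℕ) : n / 2 + n / 3 ≤ n := by
  have := Nat.div_add_mod n 2
  have := Nat.div_add_mod n 3
  omega

private lemma a_le_3u13 (n : ℕ) : n - n/2 ≤ 3 * ((n - n/2) - n/3) := by
  set q := n / 6 with hq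
  set r := n % 6 with hr
  have hn : n = 6 * q + r := (Nat.div_add_mod n 6).symm
  have e2 : n / 2 = r / 2 + 3 * q := div_decomp13 n 2 3 q r (by norm_num) (by omega)
  have e3 : n / 3 = r / 3 + 2 * q := div_decomp13 n 3 2 q r (by norm_num) (by omega)
  have hrlt : r < 6 := Nat.mod_lt _ (by norm_num)
  have h23 : r / 2 + r / 3 ≤ r := by interval_cases r <;> simp
  have key : 3 * (r / 3) ≤ 2 * (r - r / 2) := by interval_cases r <;> simp
  omega

/-! ### Binomial coefficient estimates -/

private lemma choose_le_two_pow13 (n k : ℕ) : n.choose k ≤ 2 ^ n := by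
  rcases le_or_gt k n with h | h
  · calc n.choose k ≤ ∑ m ∈ range (n+1), n.choose m :=
        Finset.single_le_sum (fun i _ => Nat.zero_le _) (mem_range.mpr (by omega))
    _ = 2 ^ n := Nat.sum_range_choose n
  · rw [Nat.choose_eq_zero_of_lt h]; positivity

private lemma four_pow_mul_central_le13 (u : ℕ) : 4 ^ u * (3*u).choose u ≤ 27 ^ u := by
  induction u with
  | zero => simp
  | succ u ih =>
    have key : (3*(u+1)).choose (u+1) * ((u+1) * ((2*u+1) * (2*u+2)))
        = (3*u).choose u * ((3*u+1) * ((3*u+2) * (3*u+3))) := by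
      have h1 : (3*(u+1)).choose (u+1) * (u+1)! * (3*(u+1) - (u+1))! = (3*(u+1))! :=
        Nat.choose_mul_factorial_mul_factorial (by omega)
      have h2 : (3*u).choose u * u ! * (3*u - u)! = (3*u)! :=
        Nat.choose_mul_factorial_mul_factorial (by omega)
      have e1 : 3*(u+1) - (u+1) = 2*u + 2 := by omega
      have e2 : 3*u - u = 2*u := by omega
      rw [e1] at h1; rw [e2] at h2
      have e3 : (3*(u+1))! = (3*u+3) * ((3*u+2) * ((3*u+1) * (3*u)!)) := by
        rw [show 3*(u+1) = (3*u+2)+1 by ring, Nat.factorial_succ,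
          show 3*u+2 = (3*u+1)+1 by ring, Nat.factorial_succ,
          show 3*u+1 = (3*u)+1 by ring, Nat.factorial_succ]
      have e4 : (u+1)! = (u+1) * u ! := Nat.factorial_succ u
      have e5 : (2*u+2)! = (2*u+2) * ((2*u+1) * (2*u)!) := by
        rw [show 2*u+2 = (2*u+1)+1 by ring, Nat.factorial_succ,
          show 2*u+1 = (2*u)+1 by ring, Nat.factorial_succ]
      have hpos : 0 < u ! * (2*u)! := Nat.mul_pos (Nat.factorial_pos _) (Nat.factorial_pos _)
      apply Nat.eq_of_mul_eq_mul_right hpos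
      calc (3*(u+1)).choose (u+1) * ((u+1) * ((2*u+1) * (2*u+2))) * (u ! * (2*u)!)
          = (3*(u+1)).choose (u+1) * ((u+1) * u !) * ((2*u+2) * ((2*u+1) * (2*u)!)) := by ring
        _ = (3*(u+1)).choose (u+1) * (u+1)! * (2*u+2)! := by rw [e4, e5]
        _ = (3*(u+1))! := h1
        _ = (3*u+3) * ((3*u+2) * ((3*u+1) * (3*u)!)) := e3
        _ = (3*u+3) * ((3*u+2) * ((3*u+1) * ((3*u).choose u * u ! * (2*u)!))) := by rw [h2]
        _ = (3*u).choose u * ((3*u+1) * ((3*u+2) * (3*u+3))) * (u ! * (2*u)!) := by ring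
    have hnum : 4 * ((3*u+1) * ((3*u+2) * (3*u+3))) ≤ 27 * ((u+1) * ((2*u+1) * (2*u+2))) := by
      nlinarith [sq_nonneg u, u.zero_le]
    have hmulpos : 0 < (u+1) * ((2*u+1) * (2*u+2)) := by positivity
    apply Nat.le_of_mul_le_mul_right (c := (u+1) * ((2*u+1) * (2*u+2))) _ hmulpos
    calc 4 ^ (u+1) * (3*(u+1)).choose (u+1) * ((u+1) * ((2*u+1) * (2*u+2)))
        = 4^u * 4 * ((3*u).choose u * ((3*u+1) * ((3*u+2) * (3*u+3)))) := by
          rw [mul_assoc, key]; ring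
      _ = (4^u * (3*u).choose u) * (4 * ((3*u+1) * ((3*u+2) * (3*u+3)))) := by ring
      _ ≤ 27^u * (27 * ((u+1) * ((2*u+1) * (2*u+2)))) := Nat.mul_le_mul ih hnum
      _ = 27 ^ (u+1) * ((u+1) * ((2*u+1) * (2*u+2))) := by ring

private lemma four_pow_le_choose13 (a t : ℕ) (h : 6 * t ≤ a) : 4 ^ t ≤ a.choose t := by
  induction t with
  | zero => simp
  | succ t ih =>
    have h6 : 6 * t ≤ a := by omega
    have ihh := ih h6
    have hkey := Nat.choose_succ_right_eq a t
    have hat : 4 * (t+1) ≤ a - t := by omega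
    have : 4 ^ (t+1) * (t+1) ≤ a.choose (t+1) * (t+1) := by
      rw [hkey]
      calc 4 ^ (t+1) * (t+1) = 4^t * (4 * (t+1)) := by ring
        _ ≤ a.choose t * (a - t) := Nat.mul_le_mul ihh hat
    exact Nat.le_of_mul_le_mul_right this (by omega)

/-! ### The covering lemma -/

private lemma cover13 (m J : ℕ) (hm : 1 ≤ m) (hJ : Nat.log 2 m ≤ J) :
    min 2 m ≤ ∑ j ∈ range (J+1), cc13 (m / 2^j) := by
  rcases eq_or_lt_of_le hm with h1 | h2
  · have h0 : cc13 (m / 2^0) = 1 := by rw [← h1]; rfl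
    have : cc13 (m / 2^0) ≤ ∑ j ∈ range (J+1), cc13 (m / 2^j) :=
      Finset.single_le_sum (f := fun j => cc13 (m / 2^j)) (fun i _ => Nat.zero_le _)
        (mem_range.mpr (by omega))
    omega
  · set j0 := Nat.log 2 m with hj0
    have hj1 : 1 ≤ j0 := by
      rw [hj0]; exact Nat.le_log_of_pow_le (by norm_num) (by omega)
    have hlow : 2 ^ j0 ≤ m := Nat.pow_log_le_self 2 (by omega)
    have hhigh : m < 2 ^ (j0 + 1) := Nat.lt_pow_succ_log_self (by norm_num) m
    have hpow : 2 ^ (j0:ℕ) = 2 * 2 ^ (j0 - 1) := by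
      rw [← pow_succ']; congr 1; omega
    have hd0 : m / 2 ^ j0 = 1 := by
      apply Nat.div_eq_of_lt_le <;> rw [pow_succ] at hhigh <;> omega
    have hd0' : cc13 (m / 2 ^ j0) = 1 := by rw [hd0]; rfl
    have hd1lo : 2 ≤ m / 2 ^ (j0 - 1) := by
      rw [Nat.le_div_iff_mul_le (by positivity)]; omega
    have hd1hi : m / 2 ^ (j0 - 1) < 4 := by
      rw [Nat.div_lt_iff_lt_mul (by positivity)]
      rw [pow_succ] at hhigh; omega
    have hd1' : cc13 (m / 2 ^ (j0 - 1)) = 1 := by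
      set d := m / 2 ^ (j0 - 1)
      interval_cases d <;> rfl
    have hsum : cc13 (m / 2 ^ (j0-1)) + cc13 (m / 2 ^ j0) ≤ ∑ j ∈ range (J+1), cc13 (m / 2^j) :=
      Finset.add_le_sum (f := fun j => cc13 (m / 2^j)) (fun i _ => Nat.zero_le _)
        (mem_range.mpr (by omega)) (mem_range.mpr (by omega)) (by omega)
    omega

/-! ### Factorization lemmas -/

private lemma lcm_factorization_le13 {ι : Type*} [DecidableEq ι] (s : Finset ι) (f : ι → ℕ)
    (hf : ∀ i ∈ s, f i ≠ 0) (p B : ℕ)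
    (h : ∀ i ∈ s, (f i).factorization p ≤ B) :
    (s.lcm f).factorization p ≤ B := by
  induction s using Finset.induction_on with
  | empty => simp
  | insert _ _ hnotmem ih =>
    rename_i a s
    rw [Finset.lcm_insert]
    have hl0 : s.lcm f ≠ 0 := by
      simp only [Ne, Finset.lcm_eq_zero_iff]
      intro hmem
      obtain ⟨i, hi, hfi⟩ := hmem
      exact hf i (Finset.mem_insert_of_mem hi) hfi
    have ha0 : f a ≠ 0 := hf a (Finset.mem_insert_self a s)
    rw [lcm_eq_nat_lcm, Nat.factorization_lcm ha0 hl0]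
    simp only [Finsupp.sup_apply, sup_le_iff]
    exact ⟨h a (Finset.mem_insert_self a s),
      ih (fun i hi => hf i (Finset.mem_insert_of_mem hi))
        (fun i hi => h i (Finset.mem_insert_of_mem hi))⟩

private lemma multinomial_fin3_factorization_le13 (k : ℕ) (t : Fin 3 → ℕ)
    (ht : ∑ i, t i = k) (p : ℕ) :
    (Nat.multinomial Finset.univ t).factorization p ≤ 2 * Nat.log p k := by
  have huniv : (Finset.univ : Finset (Fin 3)) = insert 0 {1, 2} := by decide
  have h0 : (0 : Fin 3) ∉ ({1, 2} : Finset (Fin 3)) := by decide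
  have h12 : (1 : Fin 3) ≠ 2 := by decide
  rw [huniv, Nat.multinomial_insert h0]
  have hsum : ∑ i ∈ ({1,2} : Finset (Fin 3)), t i = t 1 + t 2 := by
    rw [Finset.sum_pair h12]
  rw [hsum, Nat.binomial_eq_choose h12]
  have hchoose1 : (t 0 + (t 1 + t 2)).choose (t 0) ≠ 0 := by
    have := Nat.choose_pos (show t 0 ≤ t 0 + (t 1 + t 2) by omega); omega
  have hchoose2 : (t 1 + t 2).choose (t 1) ≠ 0 := by
    have := Nat.choose_pos (show t 1 ≤ t 1 + t 2 by omega); omega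
  rw [Nat.factorization_mul hchoose1 hchoose2]
  simp only [Finsupp.add_apply]
  have hk : t 0 + (t 1 + t 2) = k := by
    rw [← ht, Fin.sum_univ_three]; ring
  have b1 : ((t 0 + (t 1 + t 2)).choose (t 0)).factorization p ≤ Nat.log p k := by
    rw [hk]; exact Nat.factorization_choose_le_log
  have b2 : ((t 1 + t 2).choose (t 1)).factorization p ≤ Nat.log p k := by
    calc ((t 1 + t 2).choose (t 1)).factorization p ≤ Nat.log p (t 1 + t 2) :=
        Nat.factorization_choose_le_log
      _ ≤ Nat.log p k := Nat.log_mono_right (by omega)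
  omega

private lemma factorization_factorial_eq13 (p : ℕ) (hp : p.Prime) (n b : ℕ)
    (hb : Nat.log p n < b) :
    (n !).factorization p = ∑ i ∈ Ico 1 b, n / p ^ i := by
  haveI : Fact p.Prime := ⟨hp⟩
  rw [Nat.factorization_def _ hp]
  exact padicValNat_factorial hb

private lemma window_valuation13 (n p : ℕ) (hp : p.Prime) :
    cc13 (n / p) + (((n/2)!).factorization p + ((n/3)!).factorization p
        + ((n/5)!).factorization p)
      ≤ ((n)!).factorization p + ((n/30)!).factorization p := by
  set b := Nat.log p n + 2 with hb
  have hmono : ∀ c : ℕ, Nat.log p (n / c) ≤ Nat.log p n :=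
    fun c => Nat.log_mono_right (Nat.div_le_self n c)
  have L : ∀ c : ℕ, 0 < c → ((n/c)!).factorization p = ∑ i ∈ Ico 1 b, (n / p ^ i) / c := by
    intro c hc
    rw [factorization_factorial_eq13 p hp _ b (by have := hmono c; omega)]
    apply Finset.sum_congr rfl
    intro i _
    rw [Nat.div_div_eq_div_mul, Nat.div_div_eq_div_mul, mul_comm]
  have Ln : ((n)!).factorization p = ∑ i ∈ Ico 1 b, n / p ^ i :=
    factorization_factorial_eq13 p hp _ b (by omega)
  rw [L 2 (by norm_num), L 3 (by norm_num), L 5 (by norm_num), L 30 (by norm_num), Ln]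
  have h1mem : 1 ∈ Ico 1 b := by simp [hb]
  rw [← Finset.add_sum_erase _ _ h1mem, ← Finset.add_sum_erase _ _ h1mem,
      ← Finset.add_sum_erase _ _ h1mem, ← Finset.add_sum_erase _ _ h1mem,
      ← Finset.add_sum_erase _ _ h1mem]
  simp only [pow_one]
  have hrest : ∑ i ∈ (Ico 1 b).erase 1, (n / p ^ i) / 2
      + (∑ i ∈ (Ico 1 b).erase 1, (n / p ^ i) / 3
      + ∑ i ∈ (Ico 1 b).erase 1, (n / p ^ i) / 5)
      ≤ ∑ i ∈ (Ico 1 b).erase 1, (n / p ^ i) + ∑ i ∈ (Ico 1 b).erase 1, (n / p ^ i) / 30 := by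
    rw [← Finset.sum_add_distrib, ← Finset.sum_add_distrib, ← Finset.sum_add_distrib]
    exact Finset.sum_le_sum (fun i _ => by have := div235_le13 (n / p ^ i); omega)
  have hone := cc13_add (n / p)
  omega

private lemma log_eq_sum_factorization13 (n : ℕ) (hn : n ≠ 0) (s : Finset ℕ)
    (hs : n.primeFactors ⊆ s) :
    Real.log n = ∑ p ∈ s, (n.factorization p : ℝ) * Real.log p := by
  have h1 : (n : ℝ) = ∏ p ∈ n.primeFactors, (p : ℝ) ^ (n.factorization p) := by
    conv_lhs => rw [← Nat.factorization_prod_pow_eq_self hn]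
    rw [Finsupp.prod]
    rw [Nat.support_factorization]
    push_cast
    rfl
  rw [h1, Real.log_prod]
  · rw [← Finset.sum_subset hs]
    · exact Finset.sum_congr rfl (fun p hp => by rw [Real.log_pow])
    · intro p _ hp
      have : n.factorization p = 0 := by
        rw [← Nat.support_factorization] at hp
        exact Finsupp.notMem_support_iff.mp hp
      simp [this]
  · intro p hp
    have hppos : 0 < p := (Nat.prime_of_mem_primeFactors hp).pos
    positivity

/-! ### The master size inequality -/

private lemma master13 (n : ℕ) :
    n ! * (n/30)! * 4 ^ ((n - n/2 - n/3) + n/30)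
      ≤ 2^n * 27^(n - n/2 - n/3) * (n+1) * ((n/2)! * (n/3)! * (n/5)!) := by
  set a := n - n/2 with ha
  set u := a - n/3 with hu
  set m5 := n/5 with hm5
  set m30 := n/30 with hm30
  set w := m5 - m30 with hw
  have h2n : n/2 ≤ n := Nat.div_le_self n 2
  have h3a : n/3 ≤ a := by have := third_le13 n; omega
  have e1 : n ! = n.choose (n/2) * (n/2)! * a ! :=
    (Nat.choose_mul_factorial_mul_factorial h2n).symm
  have e2 : a ! = a.choose (n/3) * (n/3)! * u ! :=
    (Nat.choose_mul_factorial_mul_factorial h3a).symm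
  have h4 : a.choose (n/3) = a.choose u := (Nat.choose_symm h3a).symm
  have h4b : 4 ^ u * a.choose (n/3) ≤ 27 ^ u := by
    rw [h4]
    calc 4 ^ u * a.choose u ≤ 4 ^ u * (3*u).choose u :=
          Nat.mul_le_mul_left _ (Nat.choose_mono u (by have := a_le_3u13 n; omega))
      _ ≤ 27 ^ u := four_pow_mul_central_le13 u
  have h5 : u ! ≤ (n+1) * w ! := by
    have huw : u ≤ w + 1 := by have := u_le13 n; have := m5_ge13 n; omega
    have hwn : w + 1 ≤ n + 1 := by
      have : m5 ≤ n := Nat.div_le_self n 5; omega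
    calc u ! ≤ (w+1)! := Nat.factorial_le huw
      _ = (w+1) * w ! := Nat.factorial_succ w
      _ ≤ (n+1) * w ! := Nat.mul_le_mul_right _ hwn
  have h6 : 4 ^ m30 * (m30 ! * w !) ≤ m5 ! := by
    have hc : m5.choose m30 * m30 ! * w ! = m5 ! := by
      have h65 : m30 ≤ m5 := by have := m5_ge13 n; omega
      exact Nat.choose_mul_factorial_mul_factorial h65
    calc 4 ^ m30 * (m30 ! * w !) ≤ m5.choose m30 * (m30 ! * w !) :=
          Nat.mul_le_mul_right _ (four_pow_le_choose13 m5 m30 (m5_ge13 n))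
      _ = m5.choose m30 * m30 ! * w ! := by ring
      _ = m5 ! := hc
  calc n ! * m30 ! * 4 ^ (u + m30)
      = (n.choose (n/2)) * ((4^u * a.choose (n/3))) * ((n/2)! * (n/3)!) * (u !)
          * (4^m30 * m30 !) := by
        rw [e1, e2]; ring
    _ ≤ (2^n) * (27^u) * ((n/2)! * (n/3)!) * (u !) * (4^m30 * m30 !) := by
        apply Nat.mul_le_mul_right
        apply Nat.mul_le_mul_right
        apply Nat.mul_le_mul_right
        exact Nat.mul_le_mul (choose_le_two_pow13 n (n/2)) h4b
    _ ≤ (2^n) * (27^u) * ((n/2)! * (n/3)!) * ((n+1) * w !) * (4^m30 * m30 !) := by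
        apply Nat.mul_le_mul_right
        exact Nat.mul_le_mul_left _ h5
    _ = (2^n) * (27^u) * (n+1) * ((n/2)! * (n/3)!) * (4 ^ m30 * (m30 ! * w !)) := by ring
    _ ≤ (2^n) * (27^u) * (n+1) * ((n/2)! * (n/3)!) * m5 ! := Nat.mul_le_mul_left _ h6
    _ = 2^n * 27^u * (n+1) * ((n/2)! * (n/3)! * (n/5)!) := by rw [← hm5]; ring

/-! ### Real-side constants and estimates -/

private noncomputable def Aconst13 : ℝ :=
  Real.log 2 + (Real.log 27 - Real.log 4)/6 - Real.log 4/30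

private lemma A_nonneg13 : 0 ≤ Aconst13 := by
  have h27 : Real.log 4 ≤ Real.log 27 := Real.log_le_log (by norm_num) (by norm_num)
  have h2 : 0 ≤ Real.log 2 := Real.log_nonneg (by norm_num)
  have h4 : Real.log 4 = 2 * Real.log 2 := by
    rw [show (4:ℝ) = 2^2 by norm_num, Real.log_pow]; push_cast; ring
  unfold Aconst13; nlinarith

private lemma A_le13 : Aconst13 ≤ 39/40 := by
  have h4 : Real.log 4 = 2 * Real.log 2 := by
    rw [show (4:ℝ) = 2^2 by norm_num, Real.log_pow]; push_cast; ring
  have h27 : Real.log 27 = 3 * Real.log 3 := by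
    rw [show (27:ℝ) = 3^3 by norm_num, Real.log_pow]; push_cast; ring
  have key : 24 * Real.log 2 + 20 * Real.log 3 ≤ 39 := by
    have e : 24 * Real.log 2 + 20 * Real.log 3 = Real.log (2^24 * 3^20) := by
      rw [Real.log_mul (by positivity) (by positivity), Real.log_pow, Real.log_pow]
      push_cast; ring
    rw [e]
    have hle : ((2:ℝ)^24 * 3^20) ≤ Real.exp 39 := by
      have h1 : (2.7182818283:ℝ) ^ 39 ≤ (Real.exp 1) ^ 39 :=
        pow_le_pow_left₀ (by norm_num) (le_of_lt Real.exp_one_gt_d9) _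
      have h2 : ((2:ℝ)^24 * 3^20) ≤ (2.7182818283:ℝ) ^ 39 := by norm_num
      have he : Real.exp 39 = (Real.exp 1)^(39:ℕ) := by
        rw [← Real.exp_nat_mul]; norm_num
      rw [he]
      calc ((2:ℝ)^24 * 3^20) ≤ (2.7182818283:ℝ) ^ 39 := h2
        _ ≤ (Real.exp 1)^(39:ℕ) := h1
    calc Real.log (2^24 * 3^20) ≤ Real.log (Real.exp 39) :=
        Real.log_le_log (by positivity) hle
      _ = 39 := Real.log_exp 39
  unfold Aconst13; nlinarith

private lemma cast_div_ge13 (n c : ℕ) (hc : 0 < c) : (n:ℝ)/c - 1 ≤ ((n/c : ℕ) : ℝ) := by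
  have h := Nat.div_add_mod n c
  have hm : n % c < c := Nat.mod_lt _ hc
  have hcast : (n:ℝ) = c * ((n/c : ℕ):ℝ) + ((n % c : ℕ):ℝ) := by
    exact_mod_cast congrArg (Nat.cast : ℕ → ℝ) h.symm
  have hc' : (0:ℝ) < c := by exact_mod_cast hc
  have hm' : ((n % c : ℕ):ℝ) < c := by exact_mod_cast hm
  rw [sub_le_iff_le_add, div_le_iff₀ hc']
  nlinarith

private lemma window_log_bound13 (k j : ℕ) (hjk : 2^j ≤ k) :
    Real.log ((k/2^j) !) + Real.log (((k/2^j)/30) !)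
      - (Real.log (((k/2^j)/2) !) + Real.log (((k/2^j)/3) !) + Real.log (((k/2^j)/5) !))
      ≤ Aconst13 * ((k:ℝ)/2^j) + (2 * Real.log 27 + Real.log ((k:ℝ)+1)) := by
  set n := k / 2^j with hn
  set x : ℝ := (k:ℝ)/2^j with hx
  set u := n - n/2 - n/3 with hu
  have hxn : (n:ℝ) ≤ x := by
    rw [hx, hn]
    have := Nat.cast_div_le (m := k) (n := 2^j) (α := ℝ)
    push_cast at this ⊢
    exact this
  have hnx : x - 1 ≤ (n:ℝ) := by
    rw [hx, hn]
    have := cast_div_ge13 k (2^j) (by positivity)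
    push_cast at this ⊢
    linarith
  have hx1 : 1 ≤ x := by
    rw [hx, le_div_iff₀ (by positivity)]
    simpa using (by exact_mod_cast hjk : ((2:ℝ)^j) ≤ (k:ℝ))
  have hmaster := master13 n
  have hcast : ((n ! * (n/30)! * 4 ^ (u + n/30) : ℕ) : ℝ)
      ≤ ((2^n * 27^u * (n+1) * ((n/2)! * (n/3)! * (n/5)!) : ℕ) : ℝ) := by
    exact_mod_cast hmaster
  have hlog := Real.log_le_log (by positivity) hcast
  push_cast at hlog
  rw [Real.log_mul (by positivity) (by positivity),
      Real.log_mul (by positivity) (by positivity),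
      Real.log_pow] at hlog
  rw [Real.log_mul (by positivity) (by positivity),
      Real.log_mul (by positivity) (by positivity),
      Real.log_mul (by positivity) (by positivity),
      Real.log_mul (by positivity) (by positivity),
      Real.log_pow, Real.log_pow,
      Real.log_mul (by positivity) (by positivity)] at hlog
  push_cast at hlog
  have hlog4 : (0:ℝ) ≤ Real.log 4 := Real.log_nonneg (by norm_num)
  have hlog2 : (0:ℝ) ≤ Real.log 2 := Real.log_nonneg (by norm_num)
  have hlog274 : Real.log 4 ≤ Real.log 27 := Real.log_le_log (by norm_num) (by norm_num)
  have hu_le : (u:ℝ) ≤ x/6 + 2 := by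
    have h23 : n/2 + n/3 ≤ n := third_le13 n
    have hd2 : n/2 ≤ n := Nat.div_le_self n 2
    have hd3 : n/3 ≤ n - n/2 := by omega
    have hcu : (u:ℝ) = (n:ℝ) - ((n/2:ℕ):ℝ) - ((n/3:ℕ):ℝ) := by
      rw [hu, Nat.cast_sub hd3, Nat.cast_sub hd2]
    have hb2 : (n:ℝ)/2 - 1 ≤ ((n/2:ℕ):ℝ) := cast_div_ge13 n 2 (by norm_num)
    have hb3 : (n:ℝ)/3 - 1 ≤ ((n/3:ℕ):ℝ) := cast_div_ge13 n 3 (by norm_num)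
    rw [hcu]
    calc (n:ℝ) - ((n/2:ℕ):ℝ) - ((n/3:ℕ):ℝ) ≤ (n:ℝ)/6 + 2 := by linarith
      _ ≤ x/6 + 2 := by linarith
  have hm30_ge : x/30 - 2 ≤ ((n/30:ℕ):ℝ) := by
    have hb30 : (n:ℝ)/30 - 1 ≤ ((n/30:ℕ):ℝ) := cast_div_ge13 n 30 (by norm_num)
    have : (x-1)/30 - 1 ≤ (n:ℝ)/30 - 1 := by linarith
    calc x/30 - 2 ≤ (x-1)/30 - 1 := by linarith
      _ ≤ ((n/30:ℕ):ℝ) := by linarith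
  have hn1 : Real.log ((n:ℝ)+1) ≤ Real.log ((k:ℝ)+1) := by
    apply Real.log_le_log (by positivity)
    have h1 : (n:ℕ) ≤ k := Nat.div_le_self k (2^j)
    have h2 : (n:ℝ) ≤ (k:ℝ) := by exact_mod_cast h1
    linarith
  have expand : Aconst13 * x + (2 * Real.log 27 + Real.log ((k:ℝ)+1))
      = x * Real.log 2 + (x/6 + 2) * (Real.log 27 - Real.log 4) - (x/30 - 2) * Real.log 4
        + Real.log ((k:ℝ)+1) := by
    unfold Aconst13; ring
  rw [expand]
  have hulog : (u:ℝ) * (Real.log 27 - Real.log 4) ≤ (x/6 + 2) * (Real.log 27 - Real.log 4) :=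
    mul_le_mul_of_nonneg_right hu_le (by linarith)
  have hm30log : -(((n/30:ℕ):ℝ) * Real.log 4) ≤ -((x/30 - 2) * Real.log 4) := by
    have := mul_le_mul_of_nonneg_right hm30_ge hlog4
    linarith
  have hnlog : (n:ℝ) * Real.log 2 ≤ x * Real.log 2 :=
    mul_le_mul_of_nonneg_right hxn hlog2
  linarith


/-! ### Facts about `g k` -/

private lemma g_dvd13 (k : ℕ) :
    ((Finset.Nat.antidiagonalTuple 3 k).lcm (fun t => Nat.multinomial Finset.univ t)) ∣ k ! := by
  apply Finset.lcm_dvd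
  intro t ht
  have hsum : ∑ i, t i = k := Finset.Nat.mem_antidiagonalTuple.mp ht
  refine ⟨∏ i, (t i)!, ?_⟩
  rw [← hsum, ← Nat.multinomial_spec Finset.univ t, mul_comm]

private lemma g_ne_zero13 (k : ℕ) :
    ((Finset.Nat.antidiagonalTuple 3 k).lcm (fun t => Nat.multinomial Finset.univ t)) ≠ 0 := by
  intro h0
  have := g_dvd13 k
  rw [h0] at this
  exact Nat.factorial_ne_zero k (zero_dvd_iff.mp this)

private lemma g_factorization_le13 (k p : ℕ) :
    ((Finset.Nat.antidiagonalTuple 3 k).lcm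
        (fun t => Nat.multinomial Finset.univ t)).factorization p ≤ 2 * Nat.log p k := by
  apply lcm_factorization_le13
  · intro t _
    have := Nat.multinomial_pos Finset.univ t
    omega
  · intro t ht
    exact multinomial_fin3_factorization_le13 k t (Finset.Nat.mem_antidiagonalTuple.mp ht) p


/-! ### Part 1: the prime-counting bound -/

private lemma primeFactors_g_subset13 (k : ℕ) :
    ((Finset.Nat.antidiagonalTuple 3 k).lcm
        (fun t => Nat.multinomial Finset.univ t)).primeFactors
      ⊆ (range (k+1)).filter Nat.Prime := by
  intro p hp
  obtain ⟨hpp, hpdvd, -⟩ := Nat.mem_primeFactors.mp hp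
  have hpk : p ∣ k ! := hpdvd.trans (g_dvd13 k)
  have : p ≤ k := (Nat.Prime.dvd_factorial hpp).mp hpk
  exact Finset.mem_filter.mpr ⟨Finset.mem_range.mpr (by omega), hpp⟩

private lemma term_le13 (k p : ℕ) (hk : 1 ≤ k) (hp : p.Prime) :
    (((Finset.Nat.antidiagonalTuple 3 k).lcm
        (fun t => Nat.multinomial Finset.univ t)).factorization p : ℝ) * Real.log p
      ≤ 2 * Real.log k := by
  have hv := g_factorization_le13 k p
  have hlogp : (0:ℝ) ≤ Real.log p :=
    Real.log_nonneg (by exact_mod_cast hp.one_lt.le)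
  have hcast : (((Finset.Nat.antidiagonalTuple 3 k).lcm
      (fun t => Nat.multinomial Finset.univ t)).factorization p : ℝ)
      ≤ 2 * (Nat.log p k : ℝ) := by exact_mod_cast hv
  have hkey : (Nat.log p k : ℝ) * Real.log p ≤ Real.log k := by
    have hple : (p:ℕ) ^ (Nat.log p k) ≤ k := Nat.pow_log_le_self p (by omega)
    have hcast2 : ((p ^ Nat.log p k : ℕ) : ℝ) ≤ (k:ℝ) := by exact_mod_cast hple
    have hpos : (0:ℝ) < ((p ^ Nat.log p k : ℕ) : ℝ) := by
      have : 0 < p ^ Nat.log p k := pow_pos hp.pos _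
      exact_mod_cast this
    have := Real.log_le_log hpos hcast2
    rwa [Nat.cast_pow, Real.log_pow] at this
  calc (((Finset.Nat.antidiagonalTuple 3 k).lcm
      (fun t => Nat.multinomial Finset.univ t)).factorization p : ℝ) * Real.log p
      ≤ (2 * (Nat.log p k : ℝ)) * Real.log p := mul_le_mul_of_nonneg_right hcast hlogp
    _ = 2 * ((Nat.log p k : ℝ) * Real.log p) := by ring
    _ ≤ 2 * Real.log k := by linarith

private lemma log_g_le_pi13 (k : ℕ) (hk : 1 ≤ k) :
    Real.log (((Finset.Nat.antidiagonalTuple 3 k).lcm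
        (fun t => Nat.multinomial Finset.univ t) : ℕ) : ℝ)
      ≤ 2 * (Nat.primeCounting k) * Real.log k := by
  set P := (range (k+1)).filter Nat.Prime with hP
  have hlogG := log_eq_sum_factorization13 _ (g_ne_zero13 k) P (primeFactors_g_subset13 k)
  rw [hlogG]
  have hcard : Nat.primeCounting k = P.card := by
    rw [hP, Nat.primeCounting, Nat.primeCounting', Nat.count_eq_card_filter_range]
  calc ∑ p ∈ P, (((Finset.Nat.antidiagonalTuple 3 k).lcm
        (fun t => Nat.multinomial Finset.univ t)).factorization p : ℝ) * Real.log p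
      ≤ P.card • (2 * Real.log k) := by
        apply Finset.sum_le_card_nsmul
        intro p hp
        exact term_le13 k p hk (Finset.mem_filter.mp hp).2
    _ = (P.card : ℝ) * (2 * Real.log k) := nsmul_eq_mul _ _
    _ = 2 * (Nat.primeCounting k) * Real.log k := by rw [hcard]; ring


/-! ### Part 2: the linear bound -/

private lemma window_sum13 (k n : ℕ) (hnk : n ≤ k) :
    ∑ p ∈ (range (k+1)).filter Nat.Prime, (cc13 (n/p) : ℝ) * Real.log p
      ≤ Real.log ((n ! : ℕ):ℝ) + Real.log (((n/30)! : ℕ):ℝ)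
        - (Real.log (((n/2)! : ℕ):ℝ) + Real.log (((n/3)! : ℕ):ℝ)
            + Real.log (((n/5)! : ℕ):ℝ)) := by
  set P := (range (k+1)).filter Nat.Prime with hP
  have L : ∀ m : ℕ, m ≤ k → Real.log ((m ! : ℕ):ℝ)
      = ∑ p ∈ P, ((m !).factorization p : ℝ) * Real.log p := by
    intro m hm
    apply log_eq_sum_factorization13 _ (Nat.factorial_ne_zero m)
    intro p hp
    obtain ⟨hpp, hpdvd, -⟩ := Nat.mem_primeFactors.mp hp
    have := (Nat.Prime.dvd_factorial hpp).mp hpdvd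
    exact Finset.mem_filter.mpr ⟨Finset.mem_range.mpr (by omega), hpp⟩
  rw [L n hnk, L (n/30) (le_trans (Nat.div_le_self _ _) hnk),
      L (n/2) (le_trans (Nat.div_le_self _ _) hnk),
      L (n/3) (le_trans (Nat.div_le_self _ _) hnk),
      L (n/5) (le_trans (Nat.div_le_self _ _) hnk)]
  rw [← Finset.sum_add_distrib, ← Finset.sum_add_distrib, ← Finset.sum_add_distrib,
      ← Finset.sum_sub_distrib]
  apply Finset.sum_le_sum
  intro p hp
  have hpp : p.Prime := (Finset.mem_filter.mp hp).2
  have hlp : (0:ℝ) ≤ Real.log p := Real.log_nonneg (by exact_mod_cast hpp.one_lt.le)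
  have hw := window_valuation13 n p hpp
  have hcast : ((cc13 (n/p) : ℝ) + (((n/2)!.factorization p : ℝ)
      + ((n/3)!.factorization p : ℝ) + ((n/5)!.factorization p : ℝ)))
      ≤ (((n !).factorization p : ℝ) + ((n/30)!.factorization p : ℝ)) := by
    exact_mod_cast hw
  have := mul_le_mul_of_nonneg_right hcast hlp
  nlinarith [this]

private lemma log_g_le_lin13 (k : ℕ) (hk : 1 ≤ k) :
    Real.log (((Finset.Nat.antidiagonalTuple 3 k).lcm
        (fun t => Nat.multinomial Finset.univ t) : ℕ) : ℝ)
      ≤ ((Nat.sqrt k : ℝ) + 1) * (2 * Real.log k) + 2 * Aconst13 * k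
        + ((Nat.log 2 k : ℝ) + 1) * (2 * Real.log 27 + Real.log ((k:ℝ)+1)) := by
  set G := (Finset.Nat.antidiagonalTuple 3 k).lcm
      (fun t => Nat.multinomial Finset.univ t) with hG
  set P := (range (k+1)).filter Nat.Prime with hP
  set R := Nat.sqrt k with hR
  set J := Nat.log 2 k with hJ
  have hlogG := log_eq_sum_factorization13 G (g_ne_zero13 k) P (primeFactors_g_subset13 k)
  rw [hlogG, ← Finset.sum_filter_add_sum_filter_not P (fun p => p ≤ R)]
  have hlogk : (0:ℝ) ≤ Real.log k := Real.log_nonneg (by exact_mod_cast hk)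
  -- small primes
  have hsmall : ∑ p ∈ P.filter (fun p => p ≤ R), (G.factorization p : ℝ) * Real.log p
      ≤ ((R:ℝ)+1) * (2 * Real.log k) := by
    have hcard : (P.filter (fun p => p ≤ R)).card ≤ R + 1 := by
      have hsub : P.filter (fun p => p ≤ R) ⊆ range (R+1) := by
        intro p hp
        exact Finset.mem_range.mpr (by
          have := (Finset.mem_filter.mp hp).2; omega)
      calc (P.filter (fun p => p ≤ R)).card ≤ (range (R+1)).card := Finset.card_le_card hsub
        _ = R + 1 := Finset.card_range _
    calc ∑ p ∈ P.filter (fun p => p ≤ R), (G.factorization p : ℝ) * Real.log p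
        ≤ (P.filter (fun p => p ≤ R)).card • (2 * Real.log k) := by
          apply Finset.sum_le_card_nsmul
          intro p hp
          exact term_le13 k p hk (Finset.mem_filter.mp (Finset.mem_filter.mp hp).1).2
      _ = ((P.filter (fun p => p ≤ R)).card : ℝ) * (2 * Real.log k) := nsmul_eq_mul _ _
      _ ≤ ((R:ℝ)+1) * (2 * Real.log k) := by
          apply mul_le_mul_of_nonneg_right _ (by linarith)
          exact_mod_cast hcard
  -- large primes
  have hlarge : ∑ p ∈ P.filter (fun p => ¬ p ≤ R), (G.factorization p : ℝ) * Real.log p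
      ≤ 2 * Aconst13 * k
        + ((J:ℝ)+1) * (2 * Real.log 27 + Real.log ((k:ℝ)+1)) := by
    -- step 1 : pointwise coverage
    have step1 : ∑ p ∈ P.filter (fun p => ¬ p ≤ R), (G.factorization p : ℝ) * Real.log p
        ≤ ∑ p ∈ P.filter (fun p => ¬ p ≤ R), ∑ j ∈ range (J+1),
            (cc13 ((k/2^j)/p) : ℝ) * Real.log p := by
      apply Finset.sum_le_sum
      intro p hp
      have hpP := (Finset.mem_filter.mp hp).1
      have hpR : R < p := by have := (Finset.mem_filter.mp hp).2; omega
      have hpp : p.Prime := (Finset.mem_filter.mp hpP).2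
      have hpk : p ≤ k := by
        have := Finset.mem_range.mp (Finset.mem_filter.mp hpP).1; omega
      have hlp : (0:ℝ) ≤ Real.log p := Real.log_nonneg (by exact_mod_cast hpp.one_lt.le)
      -- nat bound
      have hv2 : G.factorization p ≤ 2 := by
        have hk2 : k < p^2 := by
          calc k < (R+1)^2 := Nat.lt_succ_sqrt' k
            _ ≤ p^2 := Nat.pow_le_pow_left (by omega) 2
        have hloglt : Nat.log p k < 2 := Nat.log_lt_of_lt_pow (by omega) hk2
        have hgf := g_factorization_le13 k p
        rw [← hG] at hgf
        omega
      have hvf : G.factorization p ≤ k / p := by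
        have hle := (Nat.factorization_le_iff_dvd (g_ne_zero13 k)
          (Nat.factorial_ne_zero k)).mpr (g_dvd13 k)
        have h1 : G.factorization p ≤ (k !).factorization p := by
          rw [hG]; exact hle p
        have hloglt : Nat.log p k < 2 := by
          have hk2 : k < p^2 := by
            calc k < (R+1)^2 := Nat.lt_succ_sqrt' k
              _ ≤ p^2 := Nat.pow_le_pow_left (by omega) 2
          exact Nat.log_lt_of_lt_pow (by omega) hk2
        have h2 : (k !).factorization p = k / p := by
          rw [factorization_factorial_eq13 p hpp k 2 hloglt]
          rw [show Ico 1 2 = {1} by rfl]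
          simp
        omega
      have hm1 : 1 ≤ k / p := (Nat.one_le_div_iff hpp.pos).mpr hpk
      have hcover := cover13 (k/p) J hm1 (Nat.log_mono_right (Nat.div_le_self k p))
      have hvcov : G.factorization p ≤ ∑ j ∈ range (J+1), cc13 ((k/p) / 2^j) := by
        omega
      have hrw : ∀ j, (k/p)/2^j = (k/2^j)/p := by
        intro j
        rw [Nat.div_div_eq_div_mul, Nat.div_div_eq_div_mul, mul_comm]
      rw [Finset.sum_congr rfl (fun j _ => by rw [hrw j])] at hvcov
      calc (G.factorization p : ℝ) * Real.log p
          ≤ ((∑ j ∈ range (J+1), cc13 ((k/2^j)/p) : ℕ) : ℝ) * Real.log p := by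
            apply mul_le_mul_of_nonneg_right _ hlp
            exact_mod_cast hvcov
        _ = ∑ j ∈ range (J+1), (cc13 ((k/2^j)/p) : ℝ) * Real.log p := by
            push_cast
            rw [Finset.sum_mul]
    -- step 2+3 : swap and extend
    have step2 : ∑ p ∈ P.filter (fun p => ¬ p ≤ R), ∑ j ∈ range (J+1),
            (cc13 ((k/2^j)/p) : ℝ) * Real.log p
        ≤ ∑ j ∈ range (J+1), ∑ p ∈ P, (cc13 ((k/2^j)/p) : ℝ) * Real.log p := by
      rw [Finset.sum_comm]
      apply Finset.sum_le_sum
      intro j _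
      apply Finset.sum_le_sum_of_subset_of_nonneg (Finset.filter_subset _ _)
      intro p hpP _
      have hpp : p.Prime := (Finset.mem_filter.mp hpP).2
      have hlp : (0:ℝ) ≤ Real.log p := Real.log_nonneg (by exact_mod_cast hpp.one_lt.le)
      positivity
    -- step 4 : per-window bound
    have step4 : ∀ j ∈ range (J+1), ∑ p ∈ P, (cc13 ((k/2^j)/p) : ℝ) * Real.log p
        ≤ Aconst13 * ((k:ℝ)/2^j) + (2 * Real.log 27 + Real.log ((k:ℝ)+1)) := by
      intro j hj
      have hjk : 2^j ≤ k := by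
        have hj' : j ≤ J := by have := Finset.mem_range.mp hj; omega
        calc 2^j ≤ 2^J := Nat.pow_le_pow_right (by norm_num) hj'
          _ ≤ k := Nat.pow_log_le_self 2 (by omega)
      calc ∑ p ∈ P, (cc13 ((k/2^j)/p) : ℝ) * Real.log p
          ≤ _ := window_sum13 k (k/2^j) (Nat.div_le_self _ _)
        _ ≤ Aconst13 * ((k:ℝ)/2^j) + (2 * Real.log 27 + Real.log ((k:ℝ)+1)) :=
            window_log_bound13 k j hjk
    -- step 5 : geometric sum
    have step5 : ∑ j ∈ range (J+1),
          (Aconst13 * ((k:ℝ)/2^j) + (2 * Real.log 27 + Real.log ((k:ℝ)+1)))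
        ≤ 2 * Aconst13 * k + ((J:ℝ)+1) * (2 * Real.log 27 + Real.log ((k:ℝ)+1)) := by
      rw [Finset.sum_add_distrib, Finset.sum_const, Finset.card_range]
      have hgeom : ∑ j ∈ range (J+1), Aconst13 * ((k:ℝ)/2^j) ≤ 2 * Aconst13 * k := by
        have e1 : ∀ j : ℕ, Aconst13 * ((k:ℝ)/2^j) = (Aconst13 * k) * (1/2)^j := by
          intro j
          rw [one_div_pow]
          field_simp
        rw [Finset.sum_congr rfl (fun j _ => e1 j), ← Finset.mul_sum]
        have hsum2 : ∑ j ∈ range (J+1), ((1:ℝ)/2)^j ≤ 2 := sum_geometric_two_le _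
        have hAk : (0:ℝ) ≤ Aconst13 * k := by
          apply mul_nonneg A_nonneg13 (by positivity)
        calc (Aconst13 * k) * ∑ j ∈ range (J+1), ((1:ℝ)/2)^j
            ≤ (Aconst13 * k) * 2 := mul_le_mul_of_nonneg_left hsum2 hAk
          _ = 2 * Aconst13 * k := by ring
      have : ((J:ℝ)+1) * (2 * Real.log 27 + Real.log ((k:ℝ)+1))
          = (J+1) • (2 * Real.log 27 + Real.log ((k:ℝ)+1)) := by
        rw [nsmul_eq_mul]; push_cast; ring
      rw [this]
      linarith [hgeom]
    calc ∑ p ∈ P.filter (fun p => ¬ p ≤ R), (G.factorization p : ℝ) * Real.log p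
        ≤ ∑ p ∈ P.filter (fun p => ¬ p ≤ R), ∑ j ∈ range (J+1),
            (cc13 ((k/2^j)/p) : ℝ) * Real.log p := step1
      _ ≤ ∑ j ∈ range (J+1), ∑ p ∈ P, (cc13 ((k/2^j)/p) : ℝ) * Real.log p := step2
      _ ≤ ∑ j ∈ range (J+1),
            (Aconst13 * ((k:ℝ)/2^j) + (2 * Real.log 27 + Real.log ((k:ℝ)+1))) :=
          Finset.sum_le_sum step4
      _ ≤ 2 * Aconst13 * k + ((J:ℝ)+1) * (2 * Real.log 27 + Real.log ((k:ℝ)+1)) := step5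
  linarith [hsmall, hlarge]

/-! ### The eventual linear bound -/

private lemma eventual13 (k : ℕ) (hk : 11120^4 ≤ k) :
    Real.log (((Finset.Nat.antidiagonalTuple 3 k).lcm
        (fun t => Nat.multinomial Finset.univ t) : ℕ) : ℝ) ≤ 2 * k := by
  have hk1 : 1 ≤ k := le_trans (by norm_num) hk
  have hk2 : 2 ≤ k := le_trans (by norm_num) hk
  set q : ℝ := Real.sqrt (Real.sqrt k) with hqdef
  have hsk : (0:ℝ) ≤ Real.sqrt k := Real.sqrt_nonneg _
  have hq0 : (0:ℝ) ≤ q := Real.sqrt_nonneg _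
  have hq2 : q^2 = Real.sqrt k := Real.sq_sqrt hsk
  have hq4 : q^4 = (k:ℝ) := by
    have h : q^4 = (q^2)^2 := by ring
    rw [h, hq2, Real.sq_sqrt (by positivity)]
  have hq1 : (1:ℝ) ≤ q := by
    rw [hqdef]
    have h1 : (1:ℝ) ≤ Real.sqrt k := by
      rw [show (1:ℝ) = Real.sqrt 1 by rw [Real.sqrt_one]]
      exact Real.sqrt_le_sqrt (by exact_mod_cast hk1)
    calc (1:ℝ) = Real.sqrt 1 := by rw [Real.sqrt_one]
      _ ≤ Real.sqrt (Real.sqrt k) := Real.sqrt_le_sqrt h1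
  have hqbig : (11120:ℝ) ≤ q := by
    rw [hqdef]
    have h1 : ((11120:ℝ)^2)^2 ≤ (k:ℝ) := by
      have h : ((11120:ℝ)^2)^2 = ((11120^4 : ℕ) : ℝ) := by push_cast; ring
      rw [h]; exact_mod_cast hk
    have h2 : (11120:ℝ)^2 ≤ Real.sqrt k := by
      calc (11120:ℝ)^2 = Real.sqrt (((11120:ℝ)^2)^2) := (Real.sqrt_sq (by positivity)).symm
        _ ≤ Real.sqrt k := Real.sqrt_le_sqrt h1
    calc (11120:ℝ) = Real.sqrt ((11120:ℝ)^2) := (Real.sqrt_sq (by norm_num)).symm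
      _ ≤ Real.sqrt (Real.sqrt k) := Real.sqrt_le_sqrt h2
  have hlogk : Real.log k ≤ 4 * q := by
    rw [← hq4, show q^4 = (q^2)^2 by ring, Real.log_pow, Real.log_pow]
    push_cast
    nlinarith [Real.log_le_sub_one_of_pos (show (0:ℝ) < q by linarith)]
  have hlogk0 : 0 ≤ Real.log k := Real.log_nonneg (by exact_mod_cast hk1)
  have hR : ((Nat.sqrt k : ℕ) : ℝ) ≤ q^2 := by
    rw [hq2]
    have h1 : ((Nat.sqrt k : ℕ):ℝ)^2 ≤ (k:ℝ) := by
      have := Nat.sqrt_le' k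
      exact_mod_cast this
    exact (Real.le_sqrt (by positivity) (by positivity)).mpr h1
  have hJ : ((Nat.log 2 k : ℕ) : ℝ) ≤ 8 * q := by
    have h1 : (2:ℕ)^(Nat.log 2 k) ≤ k := Nat.pow_log_le_self 2 (by omega)
    have h2 : ((Nat.log 2 k : ℕ):ℝ) * Real.log 2 ≤ Real.log k := by
      have hcast : ((2^(Nat.log 2 k) : ℕ) : ℝ) ≤ (k:ℝ) := by exact_mod_cast h1
      have h3 := Real.log_le_log (by positivity) hcast
      rwa [Nat.cast_pow, Real.log_pow, Nat.cast_ofNat] at h3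
    nlinarith [Real.log_two_gt_d9]
  have hlogk1 : Real.log ((k:ℝ)+1) ≤ 8 * q := by
    have h1 : ((k:ℝ)+1) ≤ (k:ℝ)^2 := by
      have h : (2:ℝ) ≤ (k:ℝ) := by exact_mod_cast hk2
      nlinarith
    calc Real.log ((k:ℝ)+1) ≤ Real.log ((k:ℝ)^2) := Real.log_le_log (by positivity) h1
      _ = 2 * Real.log k := by rw [Real.log_pow]; push_cast; ring
      _ ≤ 8 * q := by linarith
  have hlog27 : Real.log 27 ≤ 26 := by
    have := Real.log_le_sub_one_of_pos (show (0:ℝ) < 27 by norm_num)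
    linarith
  have hlog27nn : 0 ≤ Real.log 27 := Real.log_nonneg (by norm_num)
  have hloglin := log_g_le_lin13 k hk1
  have hbound : ((Nat.sqrt k : ℝ) + 1) * (2 * Real.log k) + 2 * Aconst13 * k
      + ((Nat.log 2 k : ℝ) + 1) * (2 * Real.log 27 + Real.log ((k:ℝ)+1)) ≤ 2 * k := by
    have hA := A_le13
    have hA0 := A_nonneg13
    have e1 : ((Nat.sqrt k : ℝ) + 1) * (2 * Real.log k) ≤ (q^2 + 1) * (8 * q) := by
      apply mul_le_mul (by linarith) (by linarith) (by linarith) (by positivity)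
    have e2 : ((Nat.log 2 k : ℝ) + 1) * (2 * Real.log 27 + Real.log ((k:ℝ)+1))
        ≤ (8*q + 1) * (52 + 8*q) := by
      apply mul_le_mul (by linarith) (by linarith) ?_ (by linarith)
      have hknn : (0:ℝ) ≤ (k:ℝ) := Nat.cast_nonneg k
      have h : 0 ≤ Real.log ((k:ℝ)+1) := Real.log_nonneg (by linarith)
      linarith
    have e3 : 2 * Aconst13 * k ≤ 2 * (k:ℝ) - (k:ℝ)/20 := by
      have hkpos : (0:ℝ) ≤ (k:ℝ) := by positivity
      nlinarith
    have e4 : (q^2+1)*(8*q) + (8*q+1)*(52+8*q) ≤ 556 * q^3 := by nlinarith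
    have e5 : 556 * q^3 ≤ (k:ℝ)/20 := by
      rw [← hq4]
      nlinarith
    linarith
  linarith

/-- for `k ≥ 1`, the least common multiple `g_k` of all trinomial
coefficients `k!/(k₀!k₁!k₂!)` with `k₀+k₁+k₂ = k` satisfies `g_k ≤ e^{2π(k)·log k}`;
in particular `limsup g_k^{1/k} ≤ e²`. -/
theorem stmt_13 (g : ℕ → ℕ)
    (hg : ∀ k, g k = (Finset.Nat.antidiagonalTuple 3 k).lcm
      (fun t => Nat.multinomial Finset.univ t)) :
    (∀ k : ℕ, 1 ≤ k →
      (g k : ℝ) ≤ Real.exp (2 * (Nat.primeCounting k) * Real.log k)) ∧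
    Filter.limsup (fun k => (g k : ℝ) ^ (1 / (k : ℝ))) Filter.atTop ≤ Real.exp 2 := by
  have hgpos : ∀ k, (0:ℝ) < (g k : ℝ) := by
    intro k
    have h0 : g k ≠ 0 := by rw [hg k]; exact g_ne_zero13 k
    have h1 : 0 < g k := Nat.pos_of_ne_zero h0
    exact_mod_cast h1
  constructor
  · intro k hk
    have hlog : Real.log ((g k : ℕ) : ℝ) ≤ 2 * (Nat.primeCounting k) * Real.log k := by
      rw [hg k]; exact log_g_le_pi13 k hk
    calc (g k : ℝ) = Real.exp (Real.log ((g k : ℕ) : ℝ)) := (Real.exp_log (hgpos k)).symm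
      _ ≤ Real.exp (2 * (Nat.primeCounting k) * Real.log k) := Real.exp_le_exp.mpr hlog
  · have hev : ∀ᶠ (k:ℕ) in Filter.atTop, (g k : ℝ) ^ (1/(k:ℝ)) ≤ Real.exp 2 := by
      rw [Filter.eventually_atTop]
      refine ⟨11120^4, fun k hk => ?_⟩
      have hk1 : 1 ≤ k := le_trans (by norm_num) hk
      have hkR : (0:ℝ) < (k:ℝ) := by exact_mod_cast hk1
      have hlog2k : Real.log ((g k : ℕ) : ℝ) ≤ 2 * k := by
        rw [hg k]; exact eventual13 k hk
      rw [Real.rpow_def_of_pos (hgpos k)]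
      apply Real.exp_le_exp.mpr
      rw [mul_one_div, div_le_iff₀ hkR]
      linarith
    have hcb : Filter.IsCoboundedUnder (· ≤ ·) Filter.atTop
        (fun k => (g k : ℝ) ^ (1/(k:ℝ))) :=
      Filter.isCoboundedUnder_le_of_le Filter.atTop (x := 0)
        (fun k => Real.rpow_nonneg (by positivity) _)
    exact Filter.limsup_le_of_le hcb hev
end

section
/- Let A be an m×m matrix over ℚ. For an m×m matrix M over ℚ let [M] denote the derivation of the polynomial ring ℚ[y_1,…,y_m] given by [M]P = Σ_{l=1}^{m} Σ_{j=1}^{m} M_{lj}·y_j·∂P/∂y_l, and for m×m matrices B_1,…,B_r let [B_1]·[B_2]⋯[B_r] denote the (order-independent) formal product operator P ↦ Σ_{l_1,…,l_r=1}^{m} b_{1,l_1}·b_{2,l_2}⋯b_{r,l_r}·∂^r P/(∂y_{l_1}⋯∂y_{l_r}), where b_{i,l} = Σ_{j} (B_i)_{lj} y_j. Define the composition A_n = ([A]−(n−1))∘([A]−(n−2))∘⋯∘([A]−1)∘[A] of ℚ-linear endomorphisms of ℚ[y_1,…,y_m] (where [A]−c means P ↦ [A]P − cP). Then for every n ≥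 1: (1/n!)·A_n = Σ_{s_1,…,s_n ≥ 0, s_1+2s_2+⋯+ns_n = n} (1/s_1!)·[A]^{·s_1} · (1/s_2!)·[⟨A⟩_2/2!]^{·s_2} ⋯ (1/s_n!)·[⟨A⟩_n/n!]^{·s_n}, where [M]^{·s} denotes the formal product of s copies of [M] and the products between distinct brackets are likewise formal products. -/
/-- `b_{M,l} = ∑_j M_{lj} y_j`. -/
noncomputable def bpoly {m : ℕ} (M : Matrix (Fin m) (Fin m) ℚ) (l : Fin m) :
    MvPolynomial (Fin m) ℚ :=
  ∑ j, MvPolynomial.C (M l j) * MvPolynomial.X j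

/-- The derivation `[M] : P ↦ ∑_{l,j} M_{lj} y_j ∂P/∂y_l`. -/
noncomputable def derOp {m : ℕ} (M : Matrix (Fin m) (Fin m) ℚ)
    (P : MvPolynomial (Fin m) ℚ) : MvPolynomial (Fin m) ℚ :=
  ∑ l, bpoly M l * MvPolynomial.pderiv l P

/-- The formal product `[B₁]·[B₂]⋯[B_r]` of the operators attached to a list
`L = [B₁,…,B_r]` of matrices:
`P ↦ ∑_{l₁,…,l_r} b_{B₁,l₁}⋯b_{B_r,l_r}·∂^r P/(∂y_{l₁}⋯∂y_{l_r})`. -/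
noncomputable def fprodL {m : ℕ} (L : List (Matrix (Fin m) (Fin m) ℚ))
    (P : MvPolynomial (Fin m) ℚ) : MvPolynomial (Fin m) ℚ :=
  ∑ l : Fin L.length → Fin m,
    (∏ i, bpoly (L.get i) (l i)) *
      (List.ofFn l).foldr (fun a Q => MvPolynomial.pderiv a Q) P

/-- The composition `A_n = ([A]-(n-1))∘([A]-(n-2))∘⋯∘([A]-1)∘[A]`. -/
noncomputable def An {m : ℕ} (A : Matrix (Fin m) (Fin m) ℚ) :
    ℕ → MvPolynomial (Fin m) ℚ → MvPolynomial (Fin m) ℚ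
  | 0 => id
  | n + 1 => fun P => derOp A (An A n P) - (n : ℚ) • An A n P

open MvPolynomial

theorem pderiv_comm' {σ R : Type*} [CommRing R] (i j : σ) (p : MvPolynomial σ R) :
    pderiv i (pderiv j p) = pderiv j (pderiv i p) := by
  induction p using MvPolynomial.induction_on' with
  | monomial s a =>
      classical
      simp only [pderiv_monomial]
      rcases eq_or_ne i j with rfl | hij
      · rfl
      · rw [tsub_right_comm]
        congr 1
        simp only [Finsupp.coe_tsub, Pi.sub_apply, Finsupp.single_apply, if_neg hij,
            if_neg (Ne.symm hij)]
        simp only [Nat.sub_zero]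
        ring
  | add p q hp hq => simp [hp, hq]

variable {m : ℕ}

local notation "Mat" => Matrix (Fin m) (Fin m) ℚ
local notation "Poly" => MvPolynomial (Fin m) ℚ

theorem bpoly_add (X Y : Mat) (l : Fin m) : bpoly (X + Y) l = bpoly X l + bpoly Y l := by
  simp [bpoly, add_mul, Finset.sum_add_distrib]

theorem bpoly_smul (c : ℚ) (X : Mat) (l : Fin m) : bpoly (c • X) l = c • bpoly X l := by
  simp [bpoly, Finset.smul_sum, smul_mul_assoc, MvPolynomial.smul_eq_C_mul, mul_assoc]

theorem pderiv_bpoly (B : Mat) (l k : Fin m) :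
    pderiv k (bpoly B l) = C (B l k) := by
  classical
  simp only [bpoly, map_sum]
  rw [Finset.sum_eq_single k]
  · simp
  · intro b _ hb; simp [pderiv_X_of_ne hb]
  · simp

theorem derOp_bpoly (A B : Mat) (l : Fin m) : derOp A (bpoly B l) = bpoly (B * A) l := by
  rw [derOp]
  simp only [pderiv_bpoly]
  simp only [bpoly, Matrix.mul_apply, map_sum, Finset.sum_mul, Finset.mul_sum]
  rw [Finset.sum_comm]
  apply Finset.sum_congr rfl
  intro j _
  apply Finset.sum_congr rfl
  intro k _
  rw [map_mul]
  ring

theorem derOp_add (A : Mat) (P Q : Poly) : derOp A (P + Q) = derOp A P + derOp A Q := by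
  simp [derOp, mul_add, Finset.sum_add_distrib]

theorem derOp_sub (A : Mat) (P Q : Poly) : derOp A (P - Q) = derOp A P - derOp A Q := by
  simp [derOp, mul_sub, Finset.sum_sub_distrib]

theorem derOp_smul (A : Mat) (c : ℚ) (P : Poly) : derOp A (c • P) = c • derOp A P := by
  simp [derOp, Finset.smul_sum, mul_smul_comm]

theorem derOp_sum (A : Mat) {ι : Type*} (t : Finset ι) (f : ι → Poly) :
    derOp A (∑ i ∈ t, f i) = ∑ i ∈ t, derOp A (f i) := by
  classical
  induction t using Finset.induction_on with
  | empty => simp [derOp]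
  | insert _ _ h ih => rw [Finset.sum_insert h, derOp_add, ih, Finset.sum_insert h]

theorem derOp_mul (A : Mat) (P Q : Poly) :
    derOp A (P * Q) = derOp A P * Q + P * derOp A Q := by
  simp only [derOp, pderiv_mul, mul_add, Finset.sum_add_distrib, Finset.sum_mul,
    Finset.mul_sum]
  congr 1
  · apply Finset.sum_congr rfl; intros; ring
  · apply Finset.sum_congr rfl; intros; ring

theorem foldr_pderiv_comm (lst : List (Fin m)) (a : Fin m) (P : Poly) :
    lst.foldr (fun x Q => pderiv x Q) (pderiv a P) =
      pderiv a (lst.foldr (fun x Q => pderiv x Q) P) := by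
  induction lst with
  | nil => rfl
  | cons x t ih => simp only [List.foldr_cons, ih, pderiv_comm']

theorem fprodL_nil (P : Poly) : fprodL ([] : List Mat) P = P := by
  simp [fprodL]

theorem fprodL_cons (B : Mat) (L : List Mat) (P : Poly) :
    fprodL (B :: L) P = ∑ a, bpoly B a * fprodL L (pderiv a P) := by
  rw [fprodL]
  simp only [List.length_cons]
  rw [← ((Fin.consEquiv (fun _ : Fin (L.length + 1) => Fin m)).sum_comp
    (fun l : Fin (L.length + 1) → Fin m =>
      (∏ i : Fin (L.length + 1), bpoly ((B :: L).get i) (l i)) *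
      (List.ofFn l).foldr (fun a Q => MvPolynomial.pderiv a Q) P))]
  rw [Fintype.sum_prod_type]
  apply Finset.sum_congr rfl
  intro a _
  rw [fprodL, Finset.mul_sum]
  apply Finset.sum_congr rfl
  intro l _
  have he : (Fin.consEquiv fun _ : Fin (L.length + 1) => Fin m) (a, l) = Fin.cons a l := rfl
  rw [he, Fin.prod_univ_succ]
  have h2 : List.ofFn (Fin.cons a l : Fin (L.length + 1) → Fin m)
      = a :: List.ofFn l := by
    rw [List.ofFn_succ]
    simp
  rw [h2, List.foldr_cons, foldr_pderiv_comm]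
  simp [mul_assoc]

theorem fprodL_perm {L L' : List Mat} (h : L.Perm L') (P : Poly) :
    fprodL L P = fprodL L' P := by
  induction h generalizing P with
  | nil => rfl
  | cons x _ ih =>
      rw [fprodL_cons, fprodL_cons]
      exact Finset.sum_congr rfl fun a _ => by rw [ih]
  | swap x y l =>
      rw [fprodL_cons, fprodL_cons]
      simp_rw [fprodL_cons, Finset.mul_sum]
      rw [Finset.sum_comm]
      apply Finset.sum_congr rfl; intro a _
      apply Finset.sum_congr rfl; intro b _
      rw [pderiv_comm']
      ring
  | trans _ _ ih1 ih2 => rw [ih1, ih2]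

noncomputable def FM (S : Multiset Mat) (P : Poly) : Poly :=
  Quotient.liftOn S (fun L => fprodL L P) (fun _ _ h => fprodL_perm h P)

theorem FM_coe (L : List Mat) (P : Poly) : FM (↑L) P = fprodL L P := rfl

theorem FM_zero (P : Poly) : FM (0 : Multiset Mat) P = P := fprodL_nil P

theorem FM_cons (B : Mat) (S : Multiset Mat) (P : Poly) :
    FM (B ::ₘ S) P = ∑ a, bpoly B a * FM S (pderiv a P) := by
  induction S using Quotient.inductionOn with
  | h L => exact fprodL_cons B L P

theorem multiset_sum_map_finsum {α β γ : Type*} [AddCommMonoid γ] (S : Multiset α)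
    (t : Finset β) (F : β → α → γ) :
    (S.map fun X => ∑ a ∈ t, F a X).sum = ∑ a ∈ t, (S.map (F a)).sum := by
  induction S using Multiset.induction_on with
  | empty => simp
  | cons B S ih => simp [ih, Finset.sum_add_distrib]

theorem erase_cons_of_mem {α : Type*} [DecidableEq α] (B X : α) (S : Multiset α)
    (h : X ∈ S) : (B ::ₘ S).erase X = B ::ₘ S.erase X := by
  rcases eq_or_ne B X with rfl | hx
  · rw [Multiset.erase_cons_head, Multiset.cons_erase h]
  · rw [Multiset.erase_cons_tail _ hx]

theorem FM_cons_add (X Y : Mat) (S : Multiset Mat) (P : Poly) :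
    FM ((X + Y) ::ₘ S) P = FM (X ::ₘ S) P + FM (Y ::ₘ S) P := by
  simp [FM_cons, bpoly_add, add_mul, Finset.sum_add_distrib]

theorem FM_cons_smul (c : ℚ) (X : Mat) (S : Multiset Mat) (P : Poly) :
    FM ((c • X) ::ₘ S) P = c • FM (X ::ₘ S) P := by
  simp [FM_cons, bpoly_smul, smul_mul_assoc, Finset.smul_sum]

theorem derOp_FM (A : Mat) (S : Multiset Mat) (P : Poly) :
    derOp A (FM S P) =
      FM (A ::ₘ S) P + ((S.map fun B => FM ((B * A) ::ₘ S.erase B) P)).sum := by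
  classical
  induction S using Multiset.induction_on generalizing P with
  | empty =>
      simp only [FM_zero, Multiset.map_zero, Multiset.sum_zero, add_zero, FM_cons]
      rfl
  | cons B S ih =>
      rw [FM_cons, derOp_sum]
      have hterm : ∀ a ∈ (Finset.univ : Finset (Fin m)),
          derOp A (bpoly B a * FM S (pderiv a P)) =
          bpoly (B * A) a * FM S (pderiv a P) +
            (bpoly B a * FM (A ::ₘ S) (pderiv a P) +
             bpoly B a *
               ((S.map fun X => FM ((X * A) ::ₘ S.erase X) (pderiv a P))).sum) := by
        intro a _
        rw [derOp_mul, derOp_bpoly, ih, mul_add]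
      rw [Finset.sum_congr rfl hterm, Finset.sum_add_distrib, Finset.sum_add_distrib]
      rw [← FM_cons (B * A) S P, ← FM_cons B (A ::ₘ S) P]
      have h3 : (∑ a : Fin m, bpoly B a *
            ((S.map fun X => FM ((X * A) ::ₘ S.erase X) (pderiv a P))).sum)
          = ((S.map fun X => FM ((X * A) ::ₘ (B ::ₘ S).erase X) P)).sum := by
        have hswap : ∀ a : Fin m, bpoly B a *
              ((S.map fun X => FM ((X * A) ::ₘ S.erase X) (pderiv a P))).sum
            = ((S.map fun X =>
                bpoly B a * FM ((X * A) ::ₘ S.erase X) (pderiv a P))).sum := by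
          intro a; rw [Multiset.sum_map_mul_left]
        simp only [hswap]
        rw [← multiset_sum_map_finsum S Finset.univ
          (fun a X => bpoly B a * FM ((X * A) ::ₘ S.erase X) (pderiv a P))]
        apply congrArg Multiset.sum
        apply Multiset.map_congr rfl
        intro X hX
        rw [← FM_cons B ((X * A) ::ₘ S.erase X) P, Multiset.cons_swap,
          erase_cons_of_mem B X S hX]
      rw [h3]
      rw [Multiset.map_cons, Multiset.sum_cons, Multiset.erase_cons_head,
        Multiset.cons_swap]
      abel

noncomputable def Cm (A : Mat) (k : ℕ) : Mat := ((k.factorial : ℚ))⁻¹ • fall A k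

theorem Cm_one (A : Mat) : Cm A 1 = A := by
  simp [Cm, fall]

theorem Cm_mul (A : Mat) (k : ℕ) :
    Cm A (k + 1) * A =
      (((k : ℚ) + 2)) • Cm A (k + 2) + (((k : ℚ) + 1)) • Cm A (k + 1) := by
  have hcast : (((k : ℕ) + 1 : ℕ) : Mat) = (((k : ℕ) + 1 : ℕ) : ℚ) • (1 : Mat) := by
    rw [← map_natCast (algebraMap ℚ Mat) (k + 1), Algebra.algebraMap_eq_smul_one]
  have hfall : fall A (k + 1) * A = fall A (k + 2) + ((k : ℚ) + 1) • fall A (k + 1) := by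
    have h2 : fall A (k + 2) = fall A (k + 1) * (A - ((k + 1 : ℕ) : Mat)) := rfl
    rw [h2, mul_sub, hcast, mul_smul_comm, mul_one]
    push_cast
    abel
  simp only [Cm]
  rw [smul_mul_assoc, hfall, smul_add]
  congr 1
  · rw [smul_smul]
    congr 1
    have hk2 : ((k : ℚ) + 2) ≠ 0 := by positivity
    have h3 : ((k + 2).factorial : ℚ) = ((k : ℚ) + 2) * ((k + 1).factorial : ℚ) := by
      rw [show k + 2 = (k + 1) + 1 from rfl, Nat.factorial_succ]
      push_cast; ring
    rw [h3, mul_inv, ← mul_assoc, mul_inv_cancel₀ hk2, one_mul]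
  · rw [smul_smul, smul_smul, mul_comm]

/-- the index set of partitions of `n`, encoded as `s : Fin n → ℕ`. -/
def Qn (n : ℕ) : Finset (Fin n → ℕ) :=
  (Fintype.piFinset fun _ => Finset.range (n + 1)).filter
    fun s => ∑ i : Fin n, ((i : ℕ) + 1) * s i = n

theorem mem_Qn_iff {n : ℕ} (s : Fin n → ℕ) :
    s ∈ Qn n ↔ ∑ i : Fin n, ((i : ℕ) + 1) * s i = n := by
  constructor
  · intro h; exact (Finset.mem_filter.1 h).2
  · intro h
    refine Finset.mem_filter.2 ⟨Fintype.mem_piFinset.2 fun i => ?_, h⟩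
    rw [Finset.mem_range]
    have h1 : s i ≤ ((i : ℕ) + 1) * s i := Nat.le_mul_of_pos_left _ (Nat.succ_pos _)
    have h2 : ((i : ℕ) + 1) * s i ≤ ∑ j : Fin n, ((j : ℕ) + 1) * s j :=
      Finset.single_le_sum (f := fun j : Fin n => ((j : ℕ) + 1) * s j)
        (fun j _ => Nat.zero_le _) (Finset.mem_univ i)
    omega

noncomputable def MS (A : Mat) {n : ℕ} (s : Fin n → ℕ) : Multiset Mat :=
  ∑ i : Fin n, Multiset.replicate (s i) (Cm A ((i : ℕ) + 1))

def coef {n : ℕ} (s : Fin n → ℕ) : ℚ := ∏ i, ((s i).factorial : ℚ)⁻¹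

noncomputable def T (A : Mat) (n : ℕ) (P : Poly) : Poly :=
  ∑ s ∈ Qn n, coef s • FM (MS A s) P

/-- restriction of `s' : Fin (n+1) → ℕ` to `Fin n`. -/
def restr {n : ℕ} (s' : Fin (n + 1) → ℕ) : Fin n → ℕ := fun k => s' k.castSucc

theorem snoc_restr {n : ℕ} (s' : Fin (n + 1) → ℕ) (h : s' (Fin.last n) = 0) :
    Fin.snoc (restr s') 0 = s' := by
  funext j
  induction j using Fin.lastCases with
  | last => simp [h]
  | cast k => simp [restr]

theorem restr_snoc {n : ℕ} (s : Fin n → ℕ) : restr (Fin.snoc s 0) = s := by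
  funext k; simp [restr]

theorem sum_w_snoc {n : ℕ} (s : Fin n → ℕ) :
    ∑ j : Fin (n + 1), ((j : ℕ) + 1) * (Fin.snoc s 0 : Fin (n + 1) → ℕ) j
      = ∑ i : Fin n, ((i : ℕ) + 1) * s i := by
  rw [Fin.sum_univ_castSucc]
  simp

theorem coef_snoc {n : ℕ} (s : Fin n → ℕ) :
    coef (Fin.snoc s 0 : Fin (n + 1) → ℕ) = coef s := by
  unfold coef
  rw [Fin.prod_univ_castSucc]
  simp

theorem MS_snoc (A : Mat) {n : ℕ} (s : Fin n → ℕ) :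
    MS A (Fin.snoc s 0 : Fin (n + 1) → ℕ) = MS A s := by
  unfold MS
  rw [Fin.sum_univ_castSucc]
  simp

theorem sum_w_update {n : ℕ} (f : Fin n → ℕ) (a : Fin n) (v : ℕ) :
    (∑ j : Fin n, ((j : ℕ) + 1) * Function.update f a v j) + ((a : ℕ) + 1) * f a
      = (∑ j : Fin n, ((j : ℕ) + 1) * f j) + ((a : ℕ) + 1) * v := by
  classical
  rw [← Finset.add_sum_erase _ _ (Finset.mem_univ a),
    ← Finset.add_sum_erase _ (fun j : Fin n => ((j : ℕ) + 1) * f j) (Finset.mem_univ a)]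
  rw [Function.update_self]
  have : ∑ j ∈ Finset.univ.erase a, ((j : ℕ) + 1) * Function.update f a v j
      = ∑ j ∈ Finset.univ.erase a, ((j : ℕ) + 1) * f j := by
    apply Finset.sum_congr rfl
    intro j hj
    rw [Function.update_of_ne (Finset.ne_of_mem_erase hj)]
  rw [this]
  ring

theorem coef_update {n : ℕ} (f : Fin n → ℕ) (a : Fin n) (v : ℕ) :
    coef (Function.update f a v) * ((f a).factorial : ℚ)⁻¹
      = coef f * ((v).factorial : ℚ)⁻¹ := by
  classical
  unfold coef
  rw [← Finset.prod_erase_mul _ _ (Finset.mem_univ a),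
    ← Finset.prod_erase_mul _ (fun j : Fin n => ((f j).factorial : ℚ)⁻¹) (Finset.mem_univ a)]
  rw [Function.update_self]
  have : ∏ j ∈ Finset.univ.erase a, ((Function.update f a v j).factorial : ℚ)⁻¹
      = ∏ j ∈ Finset.univ.erase a, ((f j).factorial : ℚ)⁻¹ := by
    apply Finset.prod_congr rfl
    intro j hj
    rw [Function.update_of_ne (Finset.ne_of_mem_erase hj)]
  rw [this]
  ring

theorem MS_update (A : Mat) {n : ℕ} (f : Fin n → ℕ) (a : Fin n) (v : ℕ) :
    MS A (Function.update f a v) + Multiset.replicate (f a) (Cm A ((a : ℕ) + 1))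
      = MS A f + Multiset.replicate v (Cm A ((a : ℕ) + 1)) := by
  classical
  unfold MS
  rw [← Finset.add_sum_erase _ _ (Finset.mem_univ a),
    ← Finset.add_sum_erase _ (fun i => Multiset.replicate (f i) (Cm A ((i : ℕ) + 1)))
      (Finset.mem_univ a)]
  rw [Function.update_self]
  have : ∑ i ∈ Finset.univ.erase a,
        Multiset.replicate (Function.update f a v i) (Cm A ((i : ℕ) + 1))
      = ∑ i ∈ Finset.univ.erase a, Multiset.replicate (f i) (Cm A ((i : ℕ) + 1)) := by
    apply Finset.sum_congr rfl
    intro j hj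
    rw [Function.update_of_ne (Finset.ne_of_mem_erase hj)]
  rw [this]
  abel

theorem multiset_map_finsetsum {ι α γ : Type*} [AddCommMonoid γ] (t : Finset ι)
    (f : ι → Multiset α) (g : α → γ) :
    ((∑ i ∈ t, f i).map g).sum = ∑ i ∈ t, ((f i).map g).sum := by
  classical
  induction t using Finset.induction_on with
  | empty => simp
  | insert _ _ h ih => rw [Finset.sum_insert h, Finset.sum_insert h, Multiset.map_add,
      Multiset.sum_add, ih]

theorem MS_map_sum (A : Mat) {n : ℕ} (s : Fin n → ℕ) (g : Mat → Poly) :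
    ((MS A s).map g).sum = ∑ i : Fin n, (s i) • g (Cm A ((i : ℕ) + 1)) := by
  unfold MS
  rw [multiset_map_finsetsum]
  apply Finset.sum_congr rfl
  intro i _
  rw [Multiset.map_replicate, Multiset.sum_replicate]

theorem mem_MS (A : Mat) {n : ℕ} (s : Fin n → ℕ) (i : Fin n) (h : 0 < s i) :
    Cm A ((i : ℕ) + 1) ∈ MS A s := by
  unfold MS
  rw [Multiset.mem_sum]
  exact ⟨i, Finset.mem_univ i, Multiset.mem_replicate.2 ⟨by omega, rfl⟩⟩

theorem derOp_T (A : Mat) (n : ℕ) (P : Poly) :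
    derOp A (T A n P) =
      (∑ s ∈ Qn n, coef s • FM (A ::ₘ MS A s) P)
      + (∑ s ∈ Qn n, ∑ i : Fin n,
          ((s i : ℚ) * (((i : ℕ) : ℚ) + 2) * coef s) •
            FM (Cm A ((i : ℕ) + 2) ::ₘ (MS A s).erase (Cm A ((i : ℕ) + 1))) P)
      + (n : ℚ) • T A n P := by
  have key : ∀ s ∈ Qn n,
      derOp A (coef s • FM (MS A s) P) =
        coef s • FM (A ::ₘ MS A s) P
        + (∑ i : Fin n, ((s i : ℚ) * (((i : ℕ) : ℚ) + 2) * coef s) •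
            FM (Cm A ((i : ℕ) + 2) ::ₘ (MS A s).erase (Cm A ((i : ℕ) + 1))) P)
        + (n : ℚ) • (coef s • FM (MS A s) P) := by
    intro s hs
    have hsum : ∑ i : Fin n, ((i : ℕ) + 1) * s i = n := (mem_Qn_iff s).1 hs
    rw [derOp_smul, derOp_FM, MS_map_sum, smul_add, Finset.smul_sum]
    rw [add_assoc]
    congr 1
    have hterm : ∀ i ∈ (Finset.univ : Finset (Fin n)),
        coef s • (s i) • FM ((Cm A ((i : ℕ) + 1) * A) ::ₘ
            (MS A s).erase (Cm A ((i : ℕ) + 1))) P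
        = ((s i : ℚ) * (((i : ℕ) : ℚ) + 2) * coef s) •
            FM (Cm A ((i : ℕ) + 2) ::ₘ (MS A s).erase (Cm A ((i : ℕ) + 1))) P
          + (((((i : ℕ) + 1) * s i : ℕ)) : ℚ) • (coef s • FM (MS A s) P) := by
      intro i _
      rcases Nat.eq_zero_or_pos (s i) with h0 | h1
      · simp [h0]
      · have hE : Cm A ((i : ℕ) + 1) ::ₘ (MS A s).erase (Cm A ((i : ℕ) + 1)) = MS A s :=
          Multiset.cons_erase (mem_MS A s i h1)
        rw [Cm_mul, FM_cons_add, FM_cons_smul, FM_cons_smul, hE]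
        rw [← Nat.cast_smul_eq_nsmul ℚ (s i)]
        push_cast
        rw [smul_add]
        module
    rw [Finset.sum_congr rfl hterm, Finset.sum_add_distrib]
    congr 1
    rw [← Finset.sum_smul, ← Nat.cast_sum, hsum]
  rw [T, derOp_sum]
  rw [Finset.sum_congr rfl key, Finset.sum_add_distrib, Finset.sum_add_distrib,
    ← Finset.smul_sum]

theorem inv_fact_rel {x y : ℚ} {p q : ℕ}
    (h : x * ((p.factorial : ℚ))⁻¹ = y * ((q.factorial : ℚ))⁻¹) :
    x * (q.factorial : ℚ) = y * (p.factorial : ℚ) := by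
  have hp : ((p.factorial : ℚ)) ≠ 0 := Nat.cast_ne_zero.2 p.factorial_ne_zero
  have hq : ((q.factorial : ℚ)) ≠ 0 := Nat.cast_ne_zero.2 q.factorial_ne_zero
  field_simp at h
  linarith [h]

theorem sum_w_restr {n : ℕ} (u : Fin (n + 1) → ℕ) (h : u (Fin.last n) = 0) :
    ∑ k : Fin n, ((k : ℕ) + 1) * restr u k = ∑ j : Fin (n + 1), ((j : ℕ) + 1) * u j := by
  conv_rhs => rw [← snoc_restr u h]
  rw [sum_w_snoc]

theorem two_terms_le {n : ℕ} (s' : Fin (n + 1) → ℕ) (a b : Fin (n + 1)) (hab : a ≠ b) :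
    ((a : ℕ) + 1) * s' a + ((b : ℕ) + 1) * s' b
      ≤ ∑ j : Fin (n + 1), ((j : ℕ) + 1) * s' j := by
  classical
  rw [← Finset.add_sum_erase _ (fun j : Fin (n + 1) => ((j : ℕ) + 1) * s' j)
    (Finset.mem_univ a)]
  have h2 : ((b : ℕ) + 1) * s' b
      ≤ ∑ j ∈ (Finset.univ : Finset (Fin (n + 1))).erase a, ((j : ℕ) + 1) * s' j :=
    Finset.single_le_sum (f := fun j : Fin (n + 1) => ((j : ℕ) + 1) * s' j)
      (fun j _ => Nat.zero_le _) (Finset.mem_erase.2 ⟨Ne.symm hab, Finset.mem_univ _⟩)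
  omega

/-- the "add one part of size 1" map. -/
def e1 {n : ℕ} (s : Fin n → ℕ) : Fin (n + 1) → ℕ :=
  Function.update (Fin.snoc s 0) 0 ((Fin.snoc s 0 : Fin (n + 1) → ℕ) 0 + 1)

def d1 {n : ℕ} (s' : Fin (n + 1) → ℕ) : Fin n → ℕ :=
  restr (Function.update s' 0 (s' 0 - 1))

theorem last_zero1 {n : ℕ} (s' : Fin (n + 1) → ℕ) (hq : s' ∈ Qn (n + 1))
    (h0 : s' 0 ≠ 0) : Function.update s' 0 (s' 0 - 1) (Fin.last n) = 0 := by
  have hsum : ∑ j : Fin (n + 1), ((j : ℕ) + 1) * s' j = n + 1 := (mem_Qn_iff s').1 hq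
  rcases Nat.eq_zero_or_pos n with rfl | hn
  · rw [show (Fin.last 0) = (0 : Fin 1) from rfl, Function.update_self]
    have h9 : ∑ j : Fin (0 + 1), ((j : ℕ) + 1) * s' j = s' 0 := by simp
    omega
  · have hne : Fin.last n ≠ 0 := by
      intro h
      have := congrArg Fin.val h
      simp at this
      omega
    rw [Function.update_of_ne hne]
    have h2' : s' 0 + ((n : ℕ) + 1) * s' (Fin.last n) ≤ n + 1 := by
      have h2 := two_terms_le s' 0 (Fin.last n) (Ne.symm hne)
      rw [hsum] at h2
      simpa using h2
    have h3 : s' (Fin.last n) = 0 ∨ n + 1 ≤ (n + 1) * s' (Fin.last n) := by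
      rcases Nat.eq_zero_or_pos (s' (Fin.last n)) with h | h
      · exact Or.inl h
      · exact Or.inr (Nat.le_mul_of_pos_right _ h)
    omega

theorem claim1 (A : Mat) (n : ℕ) (P : Poly) :
    ∑ s ∈ Qn n, coef s • FM (A ::ₘ MS A s) P
      = ∑ s' ∈ Qn (n + 1), ((s' 0 : ℚ) * coef s') • FM (MS A s') P := by
  classical
  rw [← Finset.sum_filter_of_ne (p := fun s' : Fin (n + 1) → ℕ => s' 0 ≠ 0)
    (fun s' _ hne h0 => by simp [h0] at hne)]
  apply Finset.sum_nbij' (i := e1) (j := d1)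
  · -- e1 maps into target
    intro s hs
    have hsum : ∑ i : Fin n, ((i : ℕ) + 1) * s i = n := (mem_Qn_iff s).1 hs
    rw [Finset.mem_filter]
    constructor
    · rw [mem_Qn_iff]
      have h1 := sum_w_update (Fin.snoc s 0 : Fin (n + 1) → ℕ) 0
        ((Fin.snoc s 0 : Fin (n + 1) → ℕ) 0 + 1)
      have h2 := sum_w_snoc s
      rw [hsum] at h2
      unfold e1
      simp only [Fin.val_zero] at h1 ⊢
      omega
    · unfold e1
      rw [Function.update_self]
      omega
  · -- d1 maps back
    intro s' hs'
    rw [Finset.mem_filter] at hs'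
    obtain ⟨hq, h0⟩ := hs'
    have hsum : ∑ j : Fin (n + 1), ((j : ℕ) + 1) * s' j = n + 1 := (mem_Qn_iff s').1 hq
    rw [mem_Qn_iff]
    unfold d1
    rw [sum_w_restr _ (last_zero1 s' hq h0)]
    have h1 := sum_w_update s' 0 (s' 0 - 1)
    simp only [Fin.val_zero] at h1
    omega
  · -- d1 (e1 s) = s
    intro s hs
    unfold d1 e1
    rw [Function.update_self, Function.update_idem]
    simp only [Nat.add_sub_cancel]
    rw [Function.update_eq_self, restr_snoc]
  · -- e1 (d1 s') = s'
    intro s' hs'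
    rw [Finset.mem_filter] at hs'
    obtain ⟨hq, h0⟩ := hs'
    unfold e1 d1
    rw [snoc_restr _ (last_zero1 s' hq h0), Function.update_self, Function.update_idem]
    have : s' 0 - 1 + 1 = s' 0 := by omega
    rw [this, Function.update_eq_self]
  · -- terms are equal
    intro s hs
    have hMS : MS A (e1 s) = A ::ₘ MS A s := by
      have h1 := MS_update A (Fin.snoc s 0 : Fin (n + 1) → ℕ) 0
        ((Fin.snoc s 0 : Fin (n + 1) → ℕ) 0 + 1)
      rw [MS_snoc] at h1
      simp only [Fin.val_zero, zero_add, Cm_one] at h1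
      have h2 : MS A (e1 s) + Multiset.replicate ((Fin.snoc s 0 : Fin (n + 1) → ℕ) 0) A
          = (A ::ₘ MS A s)
            + Multiset.replicate ((Fin.snoc s 0 : Fin (n + 1) → ℕ) 0) A := by
        rw [show MS A (e1 s) = MS A (Function.update (Fin.snoc s 0) 0
          ((Fin.snoc s 0 : Fin (n + 1) → ℕ) 0 + 1)) from rfl, h1,
          Multiset.replicate_succ, ← Multiset.singleton_add, ← Multiset.singleton_add]
        abel
      exact add_right_cancel h2
    have hcoef : ((e1 s 0 : ℕ) : ℚ) * coef (e1 s) = coef s := by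
      have h1 := coef_update (Fin.snoc s 0 : Fin (n + 1) → ℕ) 0
        ((Fin.snoc s 0 : Fin (n + 1) → ℕ) 0 + 1)
      rw [coef_snoc] at h1
      have h3 := inv_fact_rel h1
      have hbne : (((Fin.snoc s 0 : Fin (n + 1) → ℕ) 0).factorial : ℚ) ≠ 0 :=
        Nat.cast_ne_zero.2 (Nat.factorial_ne_zero _)
      have h2 : e1 s 0 = (Fin.snoc s 0 : Fin (n + 1) → ℕ) 0 + 1 :=
        Function.update_self _ _ _
      rw [h2, show coef (e1 s) = coef (Function.update (Fin.snoc s 0) 0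
        ((Fin.snoc s 0 : Fin (n + 1) → ℕ) 0 + 1)) from rfl]
      apply mul_right_cancel₀ hbne
      rw [Nat.factorial_succ] at h3
      push_cast at h3 ⊢
      linear_combination h3
    rw [hMS, ← hcoef]

def e2 {n : ℕ} (i : Fin n) (s : Fin n → ℕ) : Fin (n + 1) → ℕ :=
  Function.update (Function.update (Fin.snoc s 0 : Fin (n + 1) → ℕ) i.castSucc (s i - 1)) i.succ
    ((Fin.snoc s 0 : Fin (n + 1) → ℕ) i.succ + 1)

def d2 {n : ℕ} (i : Fin n) (s' : Fin (n + 1) → ℕ) : Fin n → ℕ :=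
  restr (Function.update (Function.update s' i.succ (s' i.succ - 1)) i.castSucc
    (s' i.castSucc + 1))

theorem cs_ne_succ {n : ℕ} (i : Fin n) : i.castSucc ≠ i.succ :=
  (Fin.castSucc_lt_succ (i := i)).ne

theorem cs_ne_last {n : ℕ} (i : Fin n) : i.castSucc ≠ Fin.last n :=
  (Fin.castSucc_lt_last i).ne

theorem last_zero2 {n : ℕ} (i : Fin n) (s' : Fin (n + 1) → ℕ) (hq : s' ∈ Qn (n + 1))
    (h0 : s' i.succ ≠ 0) :
    Function.update (Function.update s' i.succ (s' i.succ - 1)) i.castSucc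
      (s' i.castSucc + 1) (Fin.last n) = 0 := by
  have hsum : ∑ j : Fin (n + 1), ((j : ℕ) + 1) * s' j = n + 1 := (mem_Qn_iff s').1 hq
  rw [Function.update_of_ne (Ne.symm (cs_ne_last i))]
  by_cases h : i.succ = Fin.last n
  · rw [← h, Function.update_self]
    have h2 : ((i.succ : ℕ) + 1) * s' i.succ
        ≤ ∑ j : Fin (n + 1), ((j : ℕ) + 1) * s' j :=
      Finset.single_le_sum (f := fun j : Fin (n + 1) => ((j : ℕ) + 1) * s' j)
        (fun j _ => Nat.zero_le _) (Finset.mem_univ _)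
    rw [hsum] at h2
    have h3 : (i.succ : ℕ) = n := by rw [h]; rfl
    rw [h3] at h2
    have h4 : s' i.succ ≤ 1 :=
      Nat.le_of_mul_le_mul_left (by omega : (n + 1) * s' i.succ ≤ (n + 1) * 1)
        (Nat.succ_pos n)
    omega
  · rw [Function.update_of_ne (Ne.symm h)]
    have h2 := two_terms_le s' i.succ (Fin.last n) h
    rw [hsum] at h2
    have h5 : ((Fin.last n : ℕ)) = n := rfl
    rw [h5] at h2
    have h6 : 1 ≤ ((i.succ : ℕ) + 1) * s' i.succ := by
      have h9 : 1 ≤ s' i.succ := by omega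
      calc 1 ≤ 1 * 1 := by norm_num
      _ ≤ ((i.succ : ℕ) + 1) * s' i.succ := Nat.mul_le_mul (by omega) h9
    have h7 : s' (Fin.last n) = 0 ∨ n + 1 ≤ (n + 1) * s' (Fin.last n) := by
      rcases Nat.eq_zero_or_pos (s' (Fin.last n)) with hh | hh
      · exact Or.inl hh
      · exact Or.inr (Nat.le_mul_of_pos_right _ hh)
    omega

theorem claim2 (A : Mat) (n : ℕ) (P : Poly) (i : Fin n) :
    ∑ s ∈ Qn n, ((s i : ℚ) * (((i : ℕ) : ℚ) + 2) * coef s) •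
        FM (Cm A ((i : ℕ) + 2) ::ₘ (MS A s).erase (Cm A ((i : ℕ) + 1))) P
      = ∑ s' ∈ Qn (n + 1),
          ((((i : ℕ) : ℚ) + 2) * (s' i.succ : ℚ) * coef s') • FM (MS A s') P := by
  classical
  rw [← Finset.sum_filter_of_ne (p := fun s : Fin n → ℕ => s i ≠ 0)
    (fun s _ hne h0 => by simp [h0] at hne)]
  rw [← Finset.sum_filter_of_ne (p := fun s' : Fin (n + 1) → ℕ => s' i.succ ≠ 0)
    (fun s' _ hne h0 => by simp [h0] at hne)]
  apply Finset.sum_nbij' (i := e2 i) (j := d2 i)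
  · -- e2 maps into target
    intro s hs
    rw [Finset.mem_filter] at hs
    obtain ⟨hq, h0⟩ := hs
    have hsum : ∑ k : Fin n, ((k : ℕ) + 1) * s k = n := (mem_Qn_iff s).1 hq
    obtain ⟨a', ha'⟩ : ∃ a', s i = a' + 1 := ⟨s i - 1, by omega⟩
    rw [Finset.mem_filter]
    constructor
    · rw [mem_Qn_iff]
      have h1 := sum_w_update
        (Function.update (Fin.snoc s 0 : Fin (n + 1) → ℕ) i.castSucc (s i - 1)) i.succ
        ((Fin.snoc s 0 : Fin (n + 1) → ℕ) i.succ + 1)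
      have h2 := sum_w_update (Fin.snoc s 0 : Fin (n + 1) → ℕ) i.castSucc (s i - 1)
      have h3 := sum_w_snoc s
      rw [hsum] at h3
      have hv1 : (Function.update (Fin.snoc s 0 : Fin (n + 1) → ℕ) i.castSucc (s i - 1)) i.succ
          = (Fin.snoc s 0 : Fin (n + 1) → ℕ) i.succ := by
        rw [Function.update_of_ne (Ne.symm (cs_ne_succ i))]
      have hv0 : (Fin.snoc s 0 : Fin (n + 1) → ℕ) i.castSucc = s i := by simp
      rw [hv1] at h1
      rw [hv0, h3] at h2
      unfold e2
      rw [ha'] at h1 h2 ⊢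
      simp only [Nat.add_sub_cancel] at h1 h2 ⊢
      simp only [Fin.val_succ, Fin.coe_castSucc] at h1 h2
      have hilt : (i : ℕ) < n := i.isLt
      have hm1 : ((i : ℕ) + 1 + 1) * ((Fin.snoc s 0 : Fin (n + 1) → ℕ) i.succ + 1)
          = ((i : ℕ) + 1 + 1) * (Fin.snoc s 0 : Fin (n + 1) → ℕ) i.succ
            + ((i : ℕ) + 1 + 1) := Nat.mul_succ _ _
      have hm2 : ((i : ℕ) + 1) * (a' + 1) = ((i : ℕ) + 1) * a' + ((i : ℕ) + 1) :=
        Nat.mul_succ _ _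
      omega
    · unfold e2
      rw [Function.update_self]
      omega
  · -- d2 maps back
    intro s' hs'
    rw [Finset.mem_filter] at hs'
    obtain ⟨hq, h0⟩ := hs'
    have hsum : ∑ j : Fin (n + 1), ((j : ℕ) + 1) * s' j = n + 1 := (mem_Qn_iff s').1 hq
    obtain ⟨b', hb'⟩ : ∃ b', s' i.succ = b' + 1 := ⟨s' i.succ - 1, by omega⟩
    rw [Finset.mem_filter]
    constructor
    · rw [mem_Qn_iff]
      unfold d2
      rw [sum_w_restr _ (last_zero2 i s' hq h0)]
      have h1 := sum_w_update (Function.update s' i.succ (s' i.succ - 1)) i.castSucc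
        (s' i.castSucc + 1)
      have h2 := sum_w_update s' i.succ (s' i.succ - 1)
      have hv1 : (Function.update s' i.succ (s' i.succ - 1)) i.castSucc = s' i.castSucc := by
        rw [Function.update_of_ne (cs_ne_succ i)]
      rw [hv1] at h1
      rw [hsum] at h2
      rw [hb'] at h1 h2 ⊢
      simp only [Nat.add_sub_cancel] at h1 h2 ⊢
      simp only [Fin.val_succ, Fin.coe_castSucc] at h1 h2
      have hilt : (i : ℕ) < n := i.isLt
      have hm1 : ((i : ℕ) + 1) * (s' i.castSucc + 1)
          = ((i : ℕ) + 1) * s' i.castSucc + ((i : ℕ) + 1) := Nat.mul_succ _ _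
      have hm2 : ((i : ℕ) + 1 + 1) * (b' + 1) = ((i : ℕ) + 1 + 1) * b' + ((i : ℕ) + 1 + 1) :=
        Nat.mul_succ _ _
      omega
    · show Function.update (Function.update s' i.succ (s' i.succ - 1)) i.castSucc
        (s' i.castSucc + 1) i.castSucc ≠ 0
      rw [Function.update_self]
      omega
  · -- d2 (e2 s) = s
    intro s hs
    rw [Finset.mem_filter] at hs
    obtain ⟨hq, h0⟩ := hs
    unfold d2
    have hEis : e2 i s i.succ = (Fin.snoc s 0 : Fin (n + 1) → ℕ) i.succ + 1 :=
      Function.update_self _ _ _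
    have hEic : e2 i s i.castSucc = s i - 1 := by
      unfold e2
      rw [Function.update_of_ne (cs_ne_succ i), Function.update_self]
    rw [hEis, hEic]
    simp only [Nat.add_sub_cancel]
    have hstep1 : Function.update (e2 i s) i.succ
        ((Fin.snoc s 0 : Fin (n + 1) → ℕ) i.succ)
        = Function.update (Fin.snoc s 0) i.castSucc (s i - 1) := by
      unfold e2
      rw [Function.update_idem]
      have hv1 : (Function.update (Fin.snoc s 0 : Fin (n + 1) → ℕ) i.castSucc (s i - 1)) i.succ
          = (Fin.snoc s 0 : Fin (n + 1) → ℕ) i.succ := by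
        rw [Function.update_of_ne (Ne.symm (cs_ne_succ i))]
      rw [← hv1]
      exact Function.update_eq_self _ _
    rw [hstep1]
    have hsi : s i - 1 + 1 = s i := by omega
    rw [hsi, Function.update_idem]
    have hfin : Function.update (Fin.snoc s 0) i.castSucc (s i)
        = (Fin.snoc s 0 : Fin (n + 1) → ℕ) := by
      rw [show (s i) = (Fin.snoc s 0 : Fin (n + 1) → ℕ) i.castSucc from by simp]
      exact Function.update_eq_self _ _
    rw [hfin, restr_snoc]
  · -- e2 (d2 s') = s'
    intro s' hs'
    rw [Finset.mem_filter] at hs'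
    obtain ⟨hq, h0⟩ := hs'
    have hlast := last_zero2 i s' hq h0
    unfold e2
    have hsnoc : (Fin.snoc (d2 i s') 0 : Fin (n + 1) → ℕ)
        = Function.update (Function.update s' i.succ (s' i.succ - 1)) i.castSucc
          (s' i.castSucc + 1) := by
      unfold d2
      exact snoc_restr _ hlast
    have hd2i : d2 i s' i = s' i.castSucc + 1 := by
      show Function.update (Function.update s' i.succ (s' i.succ - 1)) i.castSucc
        (s' i.castSucc + 1) i.castSucc = _
      rw [Function.update_self]
    rw [hsnoc, hd2i]
    simp only [Nat.add_sub_cancel]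
    have hU1 : Function.update (Function.update (Function.update s' i.succ
        (s' i.succ - 1)) i.castSucc (s' i.castSucc + 1)) i.castSucc (s' i.castSucc)
        = Function.update s' i.succ (s' i.succ - 1) := by
      rw [Function.update_idem]
      have hW : (Function.update s' i.succ (s' i.succ - 1)) i.castSucc
          = s' i.castSucc := by
        rw [Function.update_of_ne (cs_ne_succ i)]
      rw [← hW]
      exact Function.update_eq_self _ _
    rw [hU1]
    have hUis : Function.update (Function.update s' i.succ (s' i.succ - 1)) i.castSucc
        (s' i.castSucc + 1) i.succ = s' i.succ - 1 := by
      rw [Function.update_of_ne (Ne.symm (cs_ne_succ i)), Function.update_self]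
    rw [hUis]
    have hb : s' i.succ - 1 + 1 = s' i.succ := by omega
    rw [hb, Function.update_idem, Function.update_eq_self]
  · -- terms are equal
    intro s hs
    rw [Finset.mem_filter] at hs
    obtain ⟨hq, h0⟩ := hs
    obtain ⟨a', ha'⟩ : ∃ a', s i = a' + 1 := ⟨s i - 1, by omega⟩
    have hpos : 0 < s i := by omega
    have hv0 : (Fin.snoc s 0 : Fin (n + 1) → ℕ) i.castSucc = s i := by simp
    have hv1 : (Function.update (Fin.snoc s 0 : Fin (n + 1) → ℕ) i.castSucc (s i - 1)) i.succ
        = (Fin.snoc s 0 : Fin (n + 1) → ℕ) i.succ := by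
      rw [Function.update_of_ne (Ne.symm (cs_ne_succ i))]
    set E := (MS A s).erase (Cm A ((i : ℕ) + 1)) with hEdef
    have hE : Cm A ((i : ℕ) + 1) ::ₘ E = MS A s := Multiset.cons_erase (mem_MS A s i hpos)
    have hrep : Multiset.replicate (s i) (Cm A ((i : ℕ) + 1))
        = Cm A ((i : ℕ) + 1) ::ₘ Multiset.replicate (s i - 1) (Cm A ((i : ℕ) + 1)) := by
      rw [ha']
      simp [Multiset.replicate_succ]
    have key2 : MS A (Function.update (Fin.snoc s 0) i.castSucc (s i - 1)) = E := by
      have h := MS_update A (Fin.snoc s 0 : Fin (n + 1) → ℕ) i.castSucc (s i - 1)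
      rw [MS_snoc, hv0, Fin.coe_castSucc] at h
      apply add_right_cancel (b := Multiset.replicate (s i) (Cm A ((i : ℕ) + 1)))
      rw [h, ← hE, hrep, ← Multiset.singleton_add, ← Multiset.singleton_add]
      abel
    have hMS2 : MS A (e2 i s) = Cm A ((i : ℕ) + 2) ::ₘ E := by
      have h := MS_update A (Function.update (Fin.snoc s 0 : Fin (n + 1) → ℕ) i.castSucc (s i - 1)) i.succ
        ((Fin.snoc s 0 : Fin (n + 1) → ℕ) i.succ + 1)
      rw [hv1, key2, Fin.val_succ] at h
      simp only [show (i : ℕ) + 1 + 1 = (i : ℕ) + 2 from rfl] at h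
      show MS A (Function.update (Function.update (Fin.snoc s 0) i.castSucc (s i - 1))
        i.succ ((Fin.snoc s 0 : Fin (n + 1) → ℕ) i.succ + 1)) = _
      apply add_right_cancel
        (b := Multiset.replicate ((Fin.snoc s 0 : Fin (n + 1) → ℕ) i.succ)
          (Cm A ((i : ℕ) + 2)))
      rw [h, Multiset.replicate_succ, ← Multiset.singleton_add, ← Multiset.singleton_add]
      abel
    have hcoef2 : ((e2 i s i.succ : ℕ) : ℚ) * coef (e2 i s) = (s i : ℚ) * coef s := by
      have c1 := coef_update (Function.update (Fin.snoc s 0 : Fin (n + 1) → ℕ) i.castSucc (s i - 1)) i.succ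
        ((Fin.snoc s 0 : Fin (n + 1) → ℕ) i.succ + 1)
      rw [hv1] at c1
      have c2 := coef_update (Fin.snoc s 0 : Fin (n + 1) → ℕ) i.castSucc (s i - 1)
      rw [coef_snoc, hv0] at c2
      have g1 := inv_fact_rel c1
      have g2 := inv_fact_rel c2
      have hbne : (((Fin.snoc s 0 : Fin (n + 1) → ℕ) i.succ).factorial : ℚ) ≠ 0 :=
        Nat.cast_ne_zero.2 (Nat.factorial_ne_zero _)
      have hane : (((s i - 1).factorial : ℚ)) ≠ 0 :=
        Nat.cast_ne_zero.2 (Nat.factorial_ne_zero _)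
      have hfact : ((s i).factorial : ℚ) = (s i : ℚ) * (((s i - 1).factorial : ℚ)) := by
        rw [ha']
        simp only [Nat.add_sub_cancel, Nat.factorial_succ]
        push_cast
        ring
      have r1 : (((Fin.snoc s 0 : Fin (n + 1) → ℕ) i.succ : ℕ) + 1 : ℚ)
          * coef (Function.update (Function.update (Fin.snoc s 0) i.castSucc (s i - 1))
              i.succ ((Fin.snoc s 0 : Fin (n + 1) → ℕ) i.succ + 1))
          = coef (Function.update (Fin.snoc s 0) i.castSucc (s i - 1)) := by
        apply mul_right_cancel₀ hbne
        rw [Nat.factorial_succ] at g1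
        push_cast at g1 ⊢
        linear_combination g1
      have r2 : coef (Function.update (Fin.snoc s 0) i.castSucc (s i - 1))
          = ((s i : ℕ) : ℚ) * coef s := by
        apply mul_right_cancel₀ hane
        rw [hfact] at g2
        push_cast at g2 ⊢
        linear_combination g2
      have hb : e2 i s i.succ = (Fin.snoc s 0 : Fin (n + 1) → ℕ) i.succ + 1 :=
        Function.update_self _ _ _
      rw [hb]
      show (((Fin.snoc s 0 : Fin (n + 1) → ℕ) i.succ + 1 : ℕ) : ℚ)
        * coef (Function.update (Function.update (Fin.snoc s 0) i.castSucc (s i - 1))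
            i.succ ((Fin.snoc s 0 : Fin (n + 1) → ℕ) i.succ + 1))
        = ((s i : ℕ) : ℚ) * coef s
      push_cast
      rw [r1, r2]
    rw [hMS2]
    congr 1
    push_cast at hcoef2 ⊢
    linear_combination (-(((i : ℕ) : ℚ) + 2)) * hcoef2

theorem Tsucc_split (A : Mat) (n : ℕ) (P : Poly) :
    ((n : ℚ) + 1) • T A (n + 1) P
      = (∑ s' ∈ Qn (n + 1), ((s' 0 : ℚ) * coef s') • FM (MS A s') P)
        + ∑ i : Fin n, ∑ s' ∈ Qn (n + 1),
            ((((i : ℕ) : ℚ) + 2) * (s' i.succ : ℚ) * coef s') • FM (MS A s') P := by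
  rw [T, Finset.smul_sum]
  have key : ∀ s' ∈ Qn (n + 1),
      ((n : ℚ) + 1) • (coef s' • FM (MS A s') P)
        = ((s' 0 : ℚ) * coef s') • FM (MS A s') P
          + ∑ i : Fin n, ((((i : ℕ) : ℚ) + 2) * (s' i.succ : ℚ) * coef s') •
              FM (MS A s') P := by
    intro s' hs'
    have hsum : ∑ j : Fin (n + 1), ((j : ℕ) + 1) * s' j = n + 1 := (mem_Qn_iff s').1 hs'
    have hcast : ((n : ℚ) + 1)
        = ∑ j : Fin (n + 1), ((((j : ℕ) + 1) * s' j : ℕ) : ℚ) := by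
      rw [← Nat.cast_sum, hsum]
      push_cast
      ring
    rw [hcast, Finset.sum_smul, Fin.sum_univ_succ]
    congr 1
    · rw [smul_smul]
      congr 1
      push_cast
      simp
    · apply Finset.sum_congr rfl
      intro i _
      rw [smul_smul]
      congr 1
      push_cast [Fin.val_succ]
      ring
  rw [Finset.sum_congr rfl key, Finset.sum_add_distrib]
  congr 1
  rw [Finset.sum_comm]

theorem T_rec (A : Mat) (n : ℕ) (P : Poly) :
    derOp A (T A n P) - (n : ℚ) • T A n P = ((n : ℚ) + 1) • T A (n + 1) P := by
  rw [derOp_T, add_sub_cancel_right, Tsucc_split, claim1]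
  congr 1
  rw [Finset.sum_comm]
  exact Finset.sum_congr rfl fun i _ => claim2 A n P i

theorem main_eq (A : Mat) (n : ℕ) (P : Poly) :
    ((n.factorial : ℚ))⁻¹ • An A n P = T A n P := by
  induction n generalizing P with
  | zero =>
      have hQ : Qn 0 = {fun _ : Fin 0 => 0} := by
        apply Finset.eq_singleton_iff_unique_mem.2
        constructor
        · rw [mem_Qn_iff]
          simp
        · intro x _
          funext i
          exact i.elim0
      rw [T, hQ, Finset.sum_singleton]
      show ((Nat.factorial 0 : ℚ))⁻¹ • An A 0 P = _
      simp only [An, Nat.factorial_zero, Nat.cast_one, inv_one, one_smul, id]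
      have h1 : coef (fun _ : Fin 0 => 0) = 1 := by simp [coef]
      have h2 : MS A (fun _ : Fin 0 => 0) = 0 := by simp [MS]
      rw [h1, h2, FM_zero, one_smul]
  | succ n ih =>
      have hfne : ((n.factorial : ℚ)) ≠ 0 := Nat.cast_ne_zero.2 n.factorial_ne_zero
      have hT : An A n P = (n.factorial : ℚ) • T A n P := by
        rw [← ih, smul_smul, mul_inv_cancel₀ hfne, one_smul]
      show (((n + 1).factorial : ℚ))⁻¹ •
        (derOp A (An A n P) - (n : ℚ) • An A n P) = T A (n + 1) P
      rw [hT, derOp_smul]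
      have hswap : (n : ℚ) • (n.factorial : ℚ) • T A n P
          = (n.factorial : ℚ) • (n : ℚ) • T A n P := smul_comm _ _ _
      rw [hswap, ← smul_sub, T_rec, smul_smul, smul_smul]
      have hs : (((n + 1).factorial : ℚ))⁻¹ * ((n.factorial : ℚ) * ((n : ℚ) + 1)) = 1 := by
        have h3 : (((n + 1).factorial : ℚ)) = ((n : ℚ) + 1) * (n.factorial : ℚ) := by
          rw [Nat.factorial_succ]
          push_cast
          ring
        rw [h3]
        have hne2 : ((n : ℚ) + 1) ≠ 0 := by positivity
        field_simp
      have hs' : (((n + 1).factorial : ℚ))⁻¹ * (n.factorial : ℚ) * ((n : ℚ) + 1) = 1 := by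
        rw [mul_assoc]
        exact hs
      rw [hs', one_smul]

theorem coe_flatten_ofFn {α : Type*} : ∀ {k : ℕ} (f : Fin k → List α),
    (((List.ofFn f).flatten : List α) : Multiset α) = ∑ i : Fin k, ((f i : List α) : Multiset α) := by
  intro k
  induction k with
  | zero => intro f; simp
  | succ k ih =>
      intro f
      rw [List.ofFn_succ, List.flatten_cons, Fin.sum_univ_succ, ← ih (fun i => f i.succ)]
      rfl

/-- for every `n ≥ 1`,
`(1/n!)·A_n = ∑_{s₁+2s₂+⋯+ns_n = n} (1/s₁!)[A]^{·s₁}·(1/s₂!)[⟨A⟩₂/2!]^{·s₂}⋯(1/s_n!)[⟨A⟩_n/n!]^{·s_n}`,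
all products being formal products; the tuple `(s₁,…,s_n)` (necessarily with each
`s_i ≤ n`) is encoded as `s : Fin n → Fin (n+1)`, and the formal product of the
multiset of matrices containing `s_i` copies of `⟨A⟩_i/i!` is expressed via `fprodL`. -/
theorem stmt_15 {m : ℕ} (A : Matrix (Fin m) (Fin m) ℚ) (n : ℕ) (hn : 1 ≤ n)
    (P : MvPolynomial (Fin m) ℚ) :
    (n.factorial : ℚ)⁻¹ • An A n P =
      ∑ s ∈ Finset.univ.filter
          (fun s : Fin n → Fin (n + 1) => ∑ i : Fin n, ((i : ℕ) + 1) * (s i : ℕ) = n),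
        (∏ i, ((Nat.factorial (s i : ℕ) : ℚ))⁻¹) •
          fprodL
            ((List.ofFn fun i : Fin n =>
              List.replicate (s i : ℕ)
                (((Nat.factorial ((i : ℕ) + 1) : ℚ))⁻¹ • fall A ((i : ℕ) + 1))).flatten)
            P := by
  classical
  rw [main_eq A n P, T]
  refine Eq.symm (Finset.sum_nbij'
    (i := fun (s : Fin n → Fin (n + 1)) (k : Fin n) => (s k : ℕ))
    (j := fun (t : Fin n → ℕ) (k : Fin n) =>
      (⟨t k % (n + 1), Nat.mod_lt _ (Nat.succ_pos n)⟩ : Fin (n + 1)))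
    ?_ ?_ ?_ ?_ ?_)
  · intro s hs
    rw [Finset.mem_filter] at hs
    rw [mem_Qn_iff]
    exact hs.2
  · intro t ht
    have hb : ∀ k, t k < n + 1 := by
      intro k
      have := (Finset.mem_filter.1 ht).1
      rw [Fintype.mem_piFinset] at this
      exact Finset.mem_range.1 (this k)
    rw [Finset.mem_filter]
    refine ⟨Finset.mem_univ _, ?_⟩
    have hc : ∀ k : Fin n,
        ((⟨t k % (n + 1), Nat.mod_lt _ (Nat.succ_pos n)⟩ : Fin (n + 1)) : ℕ) = t k := by
      intro k
      exact Nat.mod_eq_of_lt (hb k)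
    calc ∑ i : Fin n, ((i : ℕ) + 1) *
          ((⟨t i % (n + 1), Nat.mod_lt _ (Nat.succ_pos n)⟩ : Fin (n + 1)) : ℕ)
        = ∑ i : Fin n, ((i : ℕ) + 1) * t i :=
          Finset.sum_congr rfl fun i _ => by rw [hc i]
      _ = n := (mem_Qn_iff t).1 ht
  · intro s hs
    funext k
    apply Fin.ext
    exact Nat.mod_eq_of_lt (s k).isLt
  · intro t ht
    have hb : ∀ k, t k < n + 1 := by
      intro k
      have := (Finset.mem_filter.1 ht).1
      rw [Fintype.mem_piFinset] at this
      exact Finset.mem_range.1 (this k)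
    funext k
    exact Nat.mod_eq_of_lt (hb k)
  · intro s hs
    have hL : (((List.ofFn fun i : Fin n =>
          List.replicate (s i : ℕ)
            (((Nat.factorial ((i : ℕ) + 1) : ℚ))⁻¹ • fall A ((i : ℕ) + 1))).flatten :
            List (Matrix (Fin m) (Fin m) ℚ)) : Multiset (Matrix (Fin m) (Fin m) ℚ))
        = MS A (fun k : Fin n => (s k : ℕ)) := by
      rw [coe_flatten_ofFn]
      unfold MS
      apply Finset.sum_congr rfl
      intro i _
      rw [← Multiset.coe_replicate]
      rfl
    have hFM : fprodL ((List.ofFn fun i : Fin n =>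
          List.replicate (s i : ℕ)
            (((Nat.factorial ((i : ℕ) + 1) : ℚ))⁻¹ • fall A ((i : ℕ) + 1))).flatten) P
        = FM (MS A (fun k : Fin n => (s k : ℕ))) P := by
      rw [← hL]
      rfl
    rw [hFM]
    rfl
end
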